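/- arXiv:2307.14054 — 9 statements merged into one kernel-verified Lean document; each statement's English description precedes it below -/
import Mathlib

section
/- Let s^a_n denote the number of vertices of the metallic cube Π^a_n. Then s^a_0 = 1, s^a_1 = a, and for every n ≥ 2, s^a_n = a·s^a_{n−1} + s^a_{n−2}. -/
/-! Split a vertex by its last letter. If it is not `a`, deleting it leaves an arbitrary vertex
one letter shorter, and there are `a` such letters. If it is `a`, the string ends in the block
`0a`, and deleting that block leaves an arbitrary vertex two letters shorter. -/

/-- Strings of length `n` over the alphabet `{0,1,…,a}` in which the letter `a`
occurs only immediately after a `0` (i.e. `a` appears only inside blocks `0a`). -/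
def MetallicOK (a n : ℕ) (α : Fin n → Fin (a + 1)) : Prop :=
  ∀ i : Fin n, (α i : ℕ) = a →
    ∃ j : Fin n, (j : ℕ) + 1 = (i : ℕ) ∧ (α j : ℕ) = 0

instance (a n : ℕ) : DecidablePred (MetallicOK a n) := fun α => by
  unfold MetallicOK; infer_instance

/-- Vertices of the metallic cube `Π^a_n`. -/
abbrev MetallicVertex (a n : ℕ) : Type :=
  {α : Fin n → Fin (a + 1) // MetallicOK a n α}

/-- The metallic cube `Π^a_n`: two strings are adjacent iff `Σ_i |α_i - β_i| = 1`. -/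
def metallicCube (a n : ℕ) : SimpleGraph (MetallicVertex a n) where
  Adj u v := (∑ i : Fin n, Nat.dist (u.1 i : ℕ) (v.1 i : ℕ)) = 1
  symm := by
    constructor
    intro u v h
    simpa [Nat.dist_comm] using h
  loopless := by
    constructor
    intro u h
    simp [Nat.dist_self] at h

instance (a n : ℕ) : DecidableRel (metallicCube a n).Adj := fun u v =>
  inferInstanceAs (Decidable ((∑ i : Fin n, Nat.dist (u.1 i : ℕ) (v.1 i : ℕ)) = 1))

theorem metallicOK_snoc_iff {a n : ℕ} (α : Fin n → Fin (a + 1)) (c : Fin (a + 1)) :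
    MetallicOK a (n + 1) (Fin.snoc α c) ↔
      MetallicOK a n α ∧ ((c : ℕ) = a → ∃ j : Fin n, (j : ℕ) + 1 = n ∧ (α j : ℕ) = 0) := by
  unfold MetallicOK
  have last_ne (i : Fin n) : n + 1 ≠ (i : ℕ) := by omega
  rw [Fin.forall_fin_succ']
  simp [Fin.exists_fin_succ', last_ne]

theorem MetallicOK.init {a n : ℕ} {α : Fin (n + 1) → Fin (a + 1)} (h : MetallicOK a (n + 1) α) :
    MetallicOK a n (Fin.init α) := by
  rw [← Fin.snoc_init_self α, metallicOK_snoc_iff] at h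
  exact h.1

theorem MetallicOK.penultimate_eq_zero {a n : ℕ} {α : Fin (n + 2) → Fin (a + 1)}
    (h : MetallicOK a (n + 2) α) (hlast : (α (Fin.last (n + 1)) : ℕ) = a) :
    α (Fin.last n).castSucc = 0 := by
  obtain ⟨j, hj, hj0⟩ := h _ hlast
  obtain rfl : j = (Fin.last n).castSucc := Fin.ext (by simp at hj ⊢; omega)
  exact Fin.ext hj0

namespace MetallicVertex

variable {a : ℕ}

abbrev EndsInA {n : ℕ} (v : MetallicVertex a (n + 1)) : Prop :=
  (v.1 (Fin.last n) : ℕ) = a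

def snocEquiv (n : ℕ) :
    Fin a × MetallicVertex a n ≃ {v : MetallicVertex a (n + 1) // ¬v.EndsInA} where
  toFun p := ⟨⟨Fin.snoc p.2.1 p.1.castSucc,
    (metallicOK_snoc_iff _ _).2 ⟨p.2.2, fun h => absurd h p.1.isLt.ne⟩⟩, by simpa using p.1.isLt.ne⟩
  invFun v := (⟨v.1.1 (Fin.last n), lt_of_le_of_ne (Nat.lt_succ_iff.1 (v.1.1 _).isLt) v.2⟩,
    ⟨Fin.init v.1.1, v.1.2.init⟩)
  left_inv p := by ext <;> simp
  right_inv v := by ext1; ext1; simp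

def snocBlockEquiv (ha : 0 < a) (n : ℕ) :
    MetallicVertex a n ≃ {v : MetallicVertex a (n + 2) // v.EndsInA} where
  toFun v := ⟨⟨Fin.snoc (Fin.snoc v.1 0) (Fin.last a),
    (metallicOK_snoc_iff _ _).2 ⟨(metallicOK_snoc_iff _ _).2 ⟨v.2, fun h => absurd h ha.ne⟩,
      fun _ => ⟨Fin.last n, by simp, by simp⟩⟩⟩, by simp [EndsInA]⟩
  invFun w := ⟨Fin.init (Fin.init w.1.1), w.1.2.init.init⟩
  left_inv v := by ext1; simp
  right_inv w := by
    ext1; ext1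
    have h0 := w.1.2.penultimate_eq_zero w.2
    conv_rhs => rw [← Fin.snoc_init_self w.1.1, ← Fin.snoc_init_self (Fin.init w.1.1)]
    simp [Fin.init, h0]
    exact Fin.ext w.2.symm

theorem card_endsInA_one : Fintype.card {v : MetallicVertex a 1 // v.EndsInA} = 0 := by
  refine Fintype.card_eq_zero_iff.2 ⟨fun v => ?_⟩
  obtain ⟨j, hj, -⟩ := v.1.2 _ v.2
  simp at hj

theorem card_zero : Fintype.card (MetallicVertex a 0) = 1 :=
  Fintype.card_eq_one_iff.2
    ⟨⟨Fin.elim0, fun i => i.elim0⟩, fun _ => Subtype.ext (funext fun i => i.elim0)⟩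

theorem card_succ (n : ℕ) :
    Fintype.card (MetallicVertex a (n + 1)) =
      a * Fintype.card (MetallicVertex a n) +
        Fintype.card {v : MetallicVertex a (n + 1) // v.EndsInA} := by
  rw [← Fintype.card_congr (Equiv.sumCompl EndsInA), Fintype.card_sum,
    ← Fintype.card_congr (snocEquiv n), Fintype.card_prod, Fintype.card_fin, add_comm]

end MetallicVertex

/-- `s^a_0 = 1`, `s^a_1 = a`, and `s^a_n = a·s^a_{n-1} + s^a_{n-2}` for `n ≥ 2`,
where `s^a_n` is the number of vertices of the metallic cube `Π^a_n`. -/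
theorem metallic_card_recurrence (a : ℕ) (ha : 1 ≤ a) :
    Fintype.card (MetallicVertex a 0) = 1 ∧
    Fintype.card (MetallicVertex a 1) = a ∧
    ∀ n : ℕ, 2 ≤ n →
      Fintype.card (MetallicVertex a n) =
        a * Fintype.card (MetallicVertex a (n - 1)) +
          Fintype.card (MetallicVertex a (n - 2)) := by
  refine ⟨MetallicVertex.card_zero, ?_, fun n hn => ?_⟩
  · rw [MetallicVertex.card_succ, MetallicVertex.card_zero, MetallicVertex.card_endsInA_one,
      mul_one, add_zero]
  · obtain ⟨m, rfl⟩ : ∃ m, n = m + 2 := ⟨n - 2, by omega⟩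
    rw [MetallicVertex.card_succ, ← Fintype.card_congr (MetallicVertex.snocBlockEquiv ha m)]
    rfl
end

section
/- (Canonical decomposition) Let a ≥ 1 and n ≥ 2. The vertex set of the metallic cube Π^a_n is the disjoint union of the sets A_j = {jα : α a vertex of Π^a_{n−1}} for j = 0,1,…,a−1 and B = {0aβ : β a vertex of Π^a_{n−2}}; each A_j induces a subgraph of Π^a_n isomorphic to Π^a_{n−1} (via deleting the first letter), B induces a subgraph isomorphic to Π^a_{n−2} (via deleting the first two letters), and the union A_0 ∪ ⋯ ∪ A_{a−1} induces a subgraph isomorphic to the Cartesian product P_a □ Π^a_{n−1}, where P_a is the path on a vertices. -/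
/-!
Deleting a common prefix does not change the distance `Σ |αᵢ - βᵢ|`, so deleting the first letter
(resp. the block `0a`) is an isomorphism from `A_j` (resp. `B`) onto the smaller metallic cube: the
metallic condition survives deletion and re-insertion because every letter but `a` may start a
string, and `0a` may precede anything. On `A_0 ∪ ⋯ ∪ A_{a-1}` the distance splits as
`|α₁ - β₁|` plus the distance of the tails, and this sum is `1` exactly when one summand is `1`
and the other `0`, which is adjacency in `P_a □ Π^a_{n-1}`.
-/

open SimpleGraph

section CanonicalDecomposition

variable {a n : ℕ}

theorem MetallicOK.head_ne {v : Fin (n + 1) → Fin (a + 1)} (hv : MetallicOK a (n + 1) v) :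
    (v 0 : ℕ) ≠ a := fun h => by
  obtain ⟨j, hj, -⟩ := hv 0 h
  simp at hj

theorem MetallicOK.head_lt {v : Fin (n + 1) → Fin (a + 1)} (hv : MetallicOK a (n + 1) v) :
    (v 0 : ℕ) < a :=
  lt_of_le_of_ne (Nat.lt_succ_iff.mp (v 0).isLt) hv.head_ne

theorem MetallicOK.head_eq_zero {v : Fin (n + 2) → Fin (a + 1)} (hv : MetallicOK a (n + 2) v)
    (h1 : (v 1 : ℕ) = a) : (v 0 : ℕ) = 0 := by
  obtain ⟨j, hj, hj0⟩ := hv 1 h1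
  obtain rfl : j = 0 := Fin.ext (by simpa using hj)
  exact hj0

theorem MetallicOK.cons {β : Fin n → Fin (a + 1)} (hβ : MetallicOK a n β) {c : Fin (a + 1)}
    (hc : (c : ℕ) ≠ a) : MetallicOK a (n + 1) (Fin.cons c β) := by
  intro i hi
  cases i using Fin.cases with
  | zero => exact absurd hi hc
  | succ i =>
    obtain ⟨j, hj, hj0⟩ := hβ i hi
    exact ⟨j.succ, by simpa using hj, hj0⟩

theorem MetallicOK.cons_zero_cons_last (ha : 1 ≤ a) {γ : Fin n → Fin (a + 1)}
    (hγ : MetallicOK a n γ) : MetallicOK a (n + 2) (Fin.cons 0 (Fin.cons (Fin.last a) γ)) := by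
  intro i hi
  cases i using Fin.cases with
  | zero => simp at hi; omega
  | succ i =>
    cases i using Fin.cases with
    | zero => exact ⟨0, rfl, rfl⟩
    | succ i =>
      obtain ⟨j, hj, hj0⟩ := hγ i hi
      exact ⟨j.succ.succ, by simpa using hj, hj0⟩

theorem MetallicOK.tail {v : Fin (n + 2) → Fin (a + 1)} (hv : MetallicOK a (n + 2) v)
    (h1 : (v 1 : ℕ) ≠ a) : MetallicOK a (n + 1) (Fin.tail v) := by
  intro i hi
  obtain ⟨j, hj, hj0⟩ := hv i.succ hi
  cases j using Fin.cases with
  | zero =>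
    obtain rfl : i = 0 := Fin.ext (by simp at hj; omega)
    exact absurd hi h1
  | succ j => exact ⟨j, by simpa using hj, hj0⟩

theorem MetallicOK.tail_tail {v : Fin (n + 2) → Fin (a + 1)} (hv : MetallicOK a (n + 2) v)
    (h1 : (v 1 : ℕ) = a) : MetallicOK a n (Fin.tail (Fin.tail v)) := by
  intro i hi
  obtain ⟨j, hj, hj0⟩ := hv i.succ.succ hi
  cases j using Fin.cases with
  | zero => simp at hj
  | succ j =>
    cases j using Fin.cases with
    | zero =>
      -- `v 1` would be both `0` and `a`, so `a = 0` and the first letter is `a` too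
      have := (v 0).isLt
      have := hv.head_ne
      simp only [Fin.succ_zero_eq_one] at hj0
      omega
    | succ j => exact ⟨j, by simpa using hj, hj0⟩

theorem Nat.dist_eq_zero_iff {x y : ℕ} : Nat.dist x y = 0 ↔ x = y :=
  ⟨Nat.eq_of_dist_eq_zero, Nat.dist_eq_zero⟩

theorem Nat.dist_eq_one_iff {x y : ℕ} : Nat.dist x y = 1 ↔ x + 1 = y ∨ y + 1 = x := by
  unfold Nat.dist
  omega

theorem sum_dist_eq_zero_iff {ι : Type*} [Fintype ι] {u v : ι → Fin (a + 1)} :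
    ∑ i, Nat.dist (u i) (v i) = 0 ↔ u = v := by
  simp [Finset.sum_eq_zero_iff, Nat.dist_eq_zero_iff, funext_iff, Fin.val_inj]

theorem sum_dist_eq_dist_head_add (u v : Fin (n + 1) → Fin (a + 1)) :
    ∑ i, Nat.dist (u i) (v i) =
      Nat.dist (u 0) (v 0) + ∑ i, Nat.dist (Fin.tail u i) (Fin.tail v i) :=
  Fin.sum_univ_succ _

theorem sum_dist_eq_of_head_eq {u v : Fin (n + 1) → Fin (a + 1)} (h : u 0 = v 0) :
    ∑ i, Nat.dist (u i) (v i) = ∑ i, Nat.dist (Fin.tail u i) (Fin.tail v i) := by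
  rw [sum_dist_eq_dist_head_add, h, Nat.dist_self, zero_add]

theorem sum_dist_eq_one_iff (u v : Fin (n + 1) → Fin (a + 1)) :
    ∑ i, Nat.dist (u i) (v i) = 1 ↔
      ((u 0 : ℕ) + 1 = v 0 ∨ (v 0 : ℕ) + 1 = u 0) ∧ Fin.tail u = Fin.tail v ∨
        ∑ i, Nat.dist (Fin.tail u i) (Fin.tail v i) = 1 ∧ (u 0 : ℕ) = v 0 := by
  rw [sum_dist_eq_dist_head_add, Nat.add_eq_one_iff, Nat.dist_eq_zero_iff, Nat.dist_eq_one_iff,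
    sum_dist_eq_zero_iff]
  tauto

theorem metallicCube_adj {u v : MetallicVertex a n} :
    (metallicCube a n).Adj u v ↔ ∑ i, Nat.dist (u.1 i) (v.1 i) = 1 :=
  Iff.rfl

/-- The parts `A_j` and `B` of the canonical decomposition of `Π^a_{n+2}`; by
`MetallicOK.head_eq_zero`, the strings in `B` start with the block `0a`. -/
def canonicalA (a n : ℕ) (j : Fin a) : Set (MetallicVertex a (n + 2)) :=
  {v | (v.1 0 : ℕ) = j ∧ (v.1 1 : ℕ) ≠ a}

def canonicalB (a n : ℕ) : Set (MetallicVertex a (n + 2)) :=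
  {v | (v.1 1 : ℕ) = a}

theorem existsUnique_mem_canonicalA {v : MetallicVertex a (n + 2)} (h1 : (v.1 1 : ℕ) ≠ a) :
    ∃! j, v ∈ canonicalA a n j :=
  ⟨⟨v.1 0, v.2.head_lt⟩, ⟨rfl, h1⟩, fun _ hj => Fin.ext hj.1.symm⟩

theorem mem_iUnion_canonicalA {v : MetallicVertex a (n + 2)} :
    v ∈ ⋃ j, canonicalA a n j ↔ (v.1 1 : ℕ) ≠ a :=
  ⟨fun h => (Set.mem_iUnion.mp h).elim fun _ hj => hj.2,
    fun h1 => Set.mem_iUnion.mpr (existsUnique_mem_canonicalA h1).exists⟩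

theorem canonicalB_or_canonicalA (v : MetallicVertex a (n + 2)) :
    (v ∈ canonicalB a n ∧ ∀ j, v ∉ canonicalA a n j) ∨
      (v ∉ canonicalB a n ∧ ∃! j, v ∈ canonicalA a n j) := by
  by_cases h1 : (v.1 1 : ℕ) = a
  · exact Or.inl ⟨h1, fun _ hj => hj.2 h1⟩
  · exact Or.inr ⟨h1, existsUnique_mem_canonicalA h1⟩

def induceCanonicalAIso (j : Fin a) :
    (metallicCube a (n + 2)).induce (canonicalA a n j) ≃g metallicCube a (n + 1) where
  toFun v := ⟨Fin.tail v.1.1, v.1.2.tail v.2.2⟩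
  invFun β := ⟨⟨Fin.cons j.castSucc β.1, β.2.cons j.isLt.ne⟩, rfl, β.2.head_ne⟩
  left_inv v := by
    refine Subtype.ext <| Subtype.ext ?_
    show Fin.cons j.castSucc (Fin.tail v.1.1) = v.1.1
    rw [show j.castSucc = v.1.1 0 from Fin.ext v.2.1.symm, Fin.cons_self_tail]
  right_inv β := rfl
  map_rel_iff' {u v} := by
    rw [induce_adj, metallicCube_adj, metallicCube_adj,
      sum_dist_eq_of_head_eq (Fin.ext (u.2.1.trans v.2.1.symm))]
    exact Iff.rfl

def induceCanonicalBIso (ha : 1 ≤ a) :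
    (metallicCube a (n + 2)).induce (canonicalB a n) ≃g metallicCube a n where
  toFun v := ⟨Fin.tail (Fin.tail v.1.1), v.1.2.tail_tail v.2⟩
  invFun γ := ⟨⟨Fin.cons 0 (Fin.cons (Fin.last a) γ.1), γ.2.cons_zero_cons_last ha⟩,
    by simp [canonicalB]⟩
  left_inv v := by
    refine Subtype.ext <| Subtype.ext ?_
    show Fin.cons 0 (Fin.cons (Fin.last a) (Fin.tail (Fin.tail v.1.1))) = v.1.1
    rw [show 0 = v.1.1 0 from Fin.ext (v.1.2.head_eq_zero v.2).symm,
      show Fin.last a = Fin.tail v.1.1 0 from Fin.ext v.2.symm, Fin.cons_self_tail,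
      Fin.cons_self_tail]
  right_inv γ := rfl
  map_rel_iff' {u v} := by
    have h0 : u.1.1 0 = v.1.1 0 :=
      Fin.ext ((u.1.2.head_eq_zero u.2).trans (v.1.2.head_eq_zero v.2).symm)
    have h1 : Fin.tail u.1.1 0 = Fin.tail v.1.1 0 := Fin.ext (u.2.trans v.2.symm)
    rw [induce_adj, metallicCube_adj, metallicCube_adj, sum_dist_eq_of_head_eq h0,
      sum_dist_eq_of_head_eq h1]
    exact Iff.rfl

def induceIUnionCanonicalAIso :
    (metallicCube a (n + 2)).induce (⋃ j, canonicalA a n j) ≃g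
      (pathGraph a).boxProd (metallicCube a (n + 1)) where
  toFun v :=
    (⟨v.1.1 0, v.1.2.head_lt⟩, ⟨Fin.tail v.1.1, v.1.2.tail (mem_iUnion_canonicalA.mp v.2)⟩)
  invFun p := ⟨⟨Fin.cons p.1.castSucc p.2.1, p.2.2.cons p.1.isLt.ne⟩,
    mem_iUnion_canonicalA.mpr (by simpa using p.2.2.head_ne)⟩
  left_inv v := Subtype.ext <| Subtype.ext <| Fin.cons_self_tail v.1.1
  right_inv p := by ext <;> simp
  map_rel_iff' {u v} := by
    rw [boxProd_adj, induce_adj, metallicCube_adj (u := u.1), sum_dist_eq_one_iff]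
    simp only [Equiv.coe_fn_mk, pathGraph_adj, metallicCube_adj, Subtype.mk.injEq, Fin.mk.injEq]

end CanonicalDecomposition

/-- canonical decomposition: for `n ≥ 2` the vertex set of `Π^a_n` is the
disjoint union of the sets `A_j` (vertices starting with the letter `j ≤ a−1`, not with the
block `0a`) and `B` (vertices starting with the block `0a`); each `A_j` induces a subgraph
isomorphic to `Π^a_{n−1}` via deleting the first letter, `B` induces a subgraph isomorphic
to `Π^a_{n−2}` via deleting the first two letters, and `A_0 ∪ ⋯ ∪ A_{a−1}` induces a
subgraph isomorphic to `P_a □ Π^a_{n−1}`. -/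
theorem metallic_canonical_decomposition (a n : ℕ) (ha : 1 ≤ a) (hn : 2 ≤ n)
    (A : Fin a → Set (MetallicVertex a n))
    (hA : ∀ (j : Fin a) (v : MetallicVertex a n),
      v ∈ A j ↔ ((v.1 ⟨0, by omega⟩ : ℕ) = (j : ℕ) ∧ (v.1 ⟨1, by omega⟩ : ℕ) ≠ a))
    (B : Set (MetallicVertex a n))
    (hB : ∀ v : MetallicVertex a n, v ∈ B ↔ (v.1 ⟨1, by omega⟩ : ℕ) = a) :
    (∀ v : MetallicVertex a n,
      (v ∈ B ∧ ∀ j : Fin a, v ∉ A j) ∨ (v ∉ B ∧ ∃! j : Fin a, v ∈ A j)) ∧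
    (∀ j : Fin a,
      ∃ e : (metallicCube a n).induce (A j) ≃g metallicCube a (n - 1),
        ∀ (v : A j) (i : Fin (n - 1)),
          ((e v).1 i : ℕ) = (v.1.1 ⟨(i : ℕ) + 1, by have := i.isLt; omega⟩ : ℕ)) ∧
    (∃ e : (metallicCube a n).induce B ≃g metallicCube a (n - 2),
      ∀ (v : B) (i : Fin (n - 2)),
        ((e v).1 i : ℕ) = (v.1.1 ⟨(i : ℕ) + 2, by have := i.isLt; omega⟩ : ℕ)) ∧
    (∃ e : (metallicCube a n).induce (⋃ j : Fin a, A j) ≃g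
        (SimpleGraph.pathGraph a).boxProd (metallicCube a (n - 1)),
      ∀ v : (⋃ j : Fin a, A j : Set (MetallicVertex a n)),
        (((e v).1 : ℕ) = (v.1.1 ⟨0, by omega⟩ : ℕ)) ∧
        ∀ i : Fin (n - 1),
          (((e v).2.1 i : ℕ)) = (v.1.1 ⟨(i : ℕ) + 1, by have := i.isLt; omega⟩ : ℕ)) := by
  obtain ⟨m, rfl⟩ : ∃ m, n = m + 2 := ⟨n - 2, by omega⟩
  obtain rfl : A = canonicalA a m := funext fun j => Set.ext (hA j)
  obtain rfl : B = canonicalB a m := Set.ext hB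
  exact ⟨canonicalB_or_canonicalA, fun j => ⟨induceCanonicalAIso j, fun _ _ => rfl⟩,
    ⟨induceCanonicalBIso ha, fun _ _ => rfl⟩,
    ⟨induceIUnionCanonicalAIso, fun _ => ⟨rfl, fun _ => rfl⟩⟩⟩
end

section
/- Let a ≥ 1 and n ≥ 0. For each placement of k pairwise non-overlapping blocks 0a at fixed positions in a string of length n (0 ≤ k ≤ ⌊n/2⌋), the set of vertices of Π^a_n whose 0a-blocks occur exactly at those positions induces a subgraph isomorphic to the grid P_a^{n−2k} (the (n−2k)-fold Cartesian power of the path P_a on a vertices). There are C(n−k,k) such placements for each k, these vertex classes partition V(Π^a_n), and the total number of classes is the Fibonacci number F_{n+1}. In particular Π^a_n decomposes into F_{n+1} pairwise vertex-disjoint induced grids. -/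
/-- The grid `P_a^m`: the `m`-fold Cartesian power of the path on `a` vertices,
realized on strings of length `m` over `{0,…,a−1}` with adjacency `Σ_i |f_i − g_i| = 1`. -/
def gridGraph (a m : ℕ) : SimpleGraph (Fin m → Fin a) where
  Adj f g := (∑ i : Fin m, Nat.dist (f i : ℕ) (g i : ℕ)) = 1
  symm := by
    constructor
    intro f g h
    simpa [Nat.dist_comm] using h
  loopless := by
    constructor
    intro f h
    simp [Nat.dist_self] at h

/-- A placement of pairwise non-overlapping `0a`-blocks, recorded by the set `S` of
positions carrying the letter `a`: each such position is positive (the preceding position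
carries the `0` of the block) and two distinct block positions are at distance `≥ 2`. -/
def ValidPlacement (n : ℕ) (S : Finset (Fin n)) : Prop :=
  (∀ i ∈ S, 0 < (i : ℕ)) ∧
    ∀ i ∈ S, ∀ j ∈ S, i ≠ j → 2 ≤ Nat.dist (i : ℕ) (j : ℕ)

instance (n : ℕ) : DecidablePred (ValidPlacement n) := fun S => by
  unfold ValidPlacement; infer_instance

/-!
In a vertex whose blocks sit exactly at `S`, the letter is `a` on `S`, `0` just before each
position of `S`, and anything below `a` on the remaining `n - 2|S|` free positions. Only the free
coordinates contribute to `Σ |αᵢ - βᵢ|`, so the class is the grid `P_a^{n-2|S|}`.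

Placements are the subsets of `{1, …, n - 1}` with no two consecutive elements. Splitting on
whether `n - 1` is used gives Pascal's recursion for `C(n - k, k)`, and summing over `k` gives
`F_{n+1}` by the diagonal-sum formula for Fibonacci numbers.
-/

open Finset

lemma MetallicOK.val_eq_zero_of_succ_eq {a n : ℕ} {α : Fin n → Fin (a + 1)}
    (hα : MetallicOK a n α) {i j : Fin n} (hj : (α j : ℕ) = a) (hij : (i : ℕ) + 1 = j) :
    (α i : ℕ) = 0 := by
  obtain ⟨i', hi', h0⟩ := hα j hj
  rwa [show i' = i from Fin.ext (by omega)] at h0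

namespace Metallic

lemma validPlacement_iff {n : ℕ} {S : Finset (Fin n)} :
    ValidPlacement n S ↔ (∀ i ∈ S, 0 < (i : ℕ)) ∧ ∀ i ∈ S, ∀ j ∈ S, (i : ℕ) + 1 ≠ j := by
  refine and_congr_right fun _ => ⟨fun hsep i hi j hj hij => ?_, fun hsep i hi j hj hne => ?_⟩
  · have := hsep i hi j hj (by rintro rfl; omega)
    simp only [Nat.dist] at this
    omega
  · have := Fin.val_injective.ne hne
    have := hsep i hi j hj
    have := hsep j hj i hi
    simp only [Nat.dist]
    omega

def sparseSubsets (n k : ℕ) : Finset (Finset ℕ) :=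
  {s ∈ (Ico 1 n).powersetCard k | ∀ x ∈ s, x + 1 ∉ s}

lemma mem_sparseSubsets {n k : ℕ} {s : Finset ℕ} :
    s ∈ sparseSubsets n k ↔ (s ⊆ Ico 1 n ∧ #s = k) ∧ ∀ x ∈ s, x + 1 ∉ s := by
  rw [sparseSubsets, mem_filter, mem_powersetCard]

lemma filter_notMem_sparseSubsets (n k : ℕ) :
    {s ∈ sparseSubsets (n + 2) k | n + 1 ∉ s} = sparseSubsets (n + 1) k := by
  ext s
  simp only [mem_filter, mem_sparseSubsets, subset_iff, mem_Ico]
  grind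

lemma filter_mem_sparseSubsets (n k : ℕ) :
    {s ∈ sparseSubsets (n + 2) (k + 1) | n + 1 ∈ s} =
      (sparseSubsets n k).image (insert (n + 1)) := by
  ext s
  simp only [mem_filter, mem_image, mem_sparseSubsets, subset_iff, mem_Ico]
  constructor
  · rintro ⟨⟨⟨hsub, hcard⟩, hsep⟩, hn⟩
    refine ⟨s.erase (n + 1), ⟨⟨fun x hx => ?_, ?_⟩, ?_⟩, insert_erase hn⟩
    · grind
    · rw [card_erase_of_mem hn, hcard, Nat.add_sub_cancel]
    · grind
  · rintro ⟨t, ⟨⟨hsub, hcard⟩, hsep⟩, rfl⟩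
    have hn : n + 1 ∉ t := fun h => by grind
    refine ⟨⟨⟨?_, by rw [card_insert_of_notMem hn, hcard]⟩, ?_⟩, mem_insert_self _ _⟩ <;> grind

lemma card_sparseSubsets_add_two (n k : ℕ) :
    #(sparseSubsets (n + 2) (k + 1)) =
      #(sparseSubsets (n + 1) (k + 1)) + #(sparseSubsets n k) := by
  have top_notMem : ∀ t ∈ sparseSubsets n k, n + 1 ∉ t := fun t ht hn => by
    simpa using (mem_sparseSubsets.mp ht).1.1 hn
  have hinj : Set.InjOn (insert (n + 1) : Finset ℕ → Finset ℕ) (sparseSubsets n k) :=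
    fun s hs t ht hst => by
      rw [← erase_insert (top_notMem s hs), ← erase_insert (top_notMem t ht), hst]
  rw [← card_filter_add_card_filter_not (s := sparseSubsets (n + 2) (k + 1)) (n + 1 ∈ ·),
    filter_mem_sparseSubsets, filter_notMem_sparseSubsets, card_image_of_injOn hinj, add_comm]

theorem card_sparseSubsets (n k : ℕ) : #(sparseSubsets n k) = (n - k).choose k := by
  induction n using Nat.strong_induction_on generalizing k with
  | _ n ih =>
    match n, k with
    | n, 0 => simp [sparseSubsets, filter_singleton]
    | 0, k + 1 | 1, k + 1 => simp [sparseSubsets]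
    | n + 2, k + 1 =>
      rw [card_sparseSubsets_add_two, ih (n + 1) (by omega), ih n (by omega)]
      rcases le_or_gt k n with h | h
      · rw [show n + 2 - (k + 1) = n - k + 1 by omega, show n + 1 - (k + 1) = n - k by omega,
          Nat.choose_succ_succ', add_comm]
      · rw [Nat.choose_eq_zero_of_lt (by omega), Nat.choose_eq_zero_of_lt (by omega),
          Nat.choose_eq_zero_of_lt (by omega)]

lemma validPlacement_iff_map_mem_sparseSubsets {n : ℕ} (S : Finset (Fin n)) :
    ValidPlacement n S ↔ S.map Fin.valEmbedding ∈ sparseSubsets n #S := by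
  simp only [validPlacement_iff, mem_sparseSubsets, card_map, and_true, subset_iff,
    Fin.valEmbedding_apply, mem_map, mem_Ico, not_exists, not_and, forall_exists_index, and_imp,
    forall_apply_eq_imp_iff₂, Fin.is_lt]
  exact and_congr_right' <| forall₂_congr fun _ _ => forall₂_congr fun _ _ => ne_comm

theorem card_validPlacement_card_eq (n k : ℕ) :
    #{S : Finset (Fin n) | ValidPlacement n S ∧ #S = k} = (n - k).choose k := by
  rw [← card_sparseSubsets, ← card_map (mapEmbedding Fin.valEmbedding).toEmbedding]
  congr 1
  ext t
  simp only [mem_map, mem_filter, mem_univ, true_and, RelEmbedding.coe_toEmbedding,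
    mapEmbedding_apply]
  constructor
  · rintro ⟨S, ⟨hS, rfl⟩, rfl⟩
    exact (validPlacement_iff_map_mem_sparseSubsets S).mp hS
  · intro ht
    have hsub : t ⊆ (univ : Finset (Fin n)).map Fin.valEmbedding := by
      rw [Fin.map_valEmbedding_univ]
      exact (mem_sparseSubsets.mp ht).1.1.trans Ico_subset_Iio_self
    obtain ⟨S, -, rfl⟩ := subset_map_iff.mp hsub
    have hcard : #S = k := by rw [← card_map Fin.valEmbedding, (mem_sparseSubsets.mp ht).1.2]
    exact ⟨S, ⟨(validPlacement_iff_map_mem_sparseSubsets S).mpr (hcard ▸ ht), hcard⟩, rfl⟩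

theorem card_validPlacement (n : ℕ) :
    #{S : Finset (Fin n) | ValidPlacement n S} = Nat.fib (n + 1) := by
  have card_mem_range : ∀ S : Finset (Fin n), #S ∈ range (n + 1) := fun S =>
    mem_range_succ_iff.mpr (card_le_univ S |>.trans_eq (Fintype.card_fin n))
  rw [card_eq_sum_card_fiberwise fun S _ => card_mem_range S]
  simp_rw [filter_filter, card_validPlacement_card_eq]
  rw [Nat.fib_succ_eq_sum_choose, ← Nat.sum_antidiagonal_swap,
    Nat.sum_antidiagonal_eq_sum_range_succ_mk]
  rfl

section

variable {a n : ℕ}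

lemma validPlacement_filter_val_eq (ha : 1 ≤ a) (v : MetallicVertex a n) :
    ValidPlacement n {i | (v.1 i : ℕ) = a} := by
  simp only [validPlacement_iff, mem_filter, mem_univ, true_and]
  refine ⟨fun i hi => ?_, fun i hi j hj hij => ?_⟩
  · obtain ⟨j, hj, -⟩ := v.2 i hi
    omega
  · have := v.2.val_eq_zero_of_succ_eq hj hij
    omega

theorem existsUnique_validPlacement (ha : 1 ≤ a) (v : MetallicVertex a n) :
    ∃! S : Finset (Fin n), ValidPlacement n S ∧ ∀ i : Fin n, (v.1 i : ℕ) = a ↔ i ∈ S :=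
  ⟨({i | (v.1 i : ℕ) = a} : Finset (Fin n)), ⟨validPlacement_filter_val_eq ha v, by simp⟩,
    fun S hS => by ext i; simp [hS.2 i]⟩

variable {S : Finset (Fin n)}

def zeroPositions (S : Finset (Fin n)) : Finset (Fin n) := {i | ∃ j ∈ S, (i : ℕ) + 1 = j}

def freePositions (S : Finset (Fin n)) : Finset (Fin n) := (S ∪ zeroPositions S)ᶜ

lemma notMem_of_mem_freePositions {i : Fin n} (hi : i ∈ freePositions S) : i ∉ S :=
  fun h => mem_compl.mp hi (mem_union_left _ h)

lemma disjoint_zeroPositions (hS : ValidPlacement n S) : Disjoint S (zeroPositions S) :=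
  disjoint_left.mpr fun i hi hiZ => by
    obtain ⟨j, hj, hij⟩ := (mem_filter.mp hiZ).2
    exact (validPlacement_iff.mp hS).2 i hi j hj hij

lemma card_zeroPositions (hpos : ∀ j ∈ S, 0 < (j : ℕ)) : #(zeroPositions S) = #S := by
  refine card_bij' (fun i hi => ⟨i + 1, ?_⟩) (fun j _ => ⟨j - 1, by omega⟩) ?_ ?_ ?_ ?_
  · obtain ⟨j, -, hj⟩ := (mem_filter.mp hi).2
    omega
  · rintro i hi
    obtain ⟨j, hj, hij⟩ := (mem_filter.mp hi).2
    rwa [show (⟨i + 1, _⟩ : Fin n) = j from Fin.ext hij]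
  · intro j hj
    exact mem_filter.mpr ⟨mem_univ _, j, hj, Nat.sub_add_cancel (hpos j hj)⟩
  · intro i _
    simp
  · intro j hj
    exact Fin.ext (Nat.sub_add_cancel (hpos j hj))

lemma card_freePositions (hS : ValidPlacement n S) : #(freePositions S) = n - 2 * #S := by
  rw [freePositions, card_compl, card_union_of_disjoint (disjoint_zeroPositions hS),
    card_zeroPositions hS.1, Fintype.card_fin, two_mul]

def blockClass (a : ℕ) (S : Finset (Fin n)) : Set (MetallicVertex a n) :=
  {v | ∀ i : Fin n, (v.1 i : ℕ) = a ↔ i ∈ S}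

lemma val_eq_zero_of_mem_zeroPositions {v : MetallicVertex a n} (hv : v ∈ blockClass a S)
    {i : Fin n} (hi : i ∈ zeroPositions S) : (v.1 i : ℕ) = 0 := by
  obtain ⟨j, hj, hij⟩ := (mem_filter.mp hi).2
  exact v.2.val_eq_zero_of_succ_eq ((hv j).mpr hj) hij

lemma val_lt_of_mem_freePositions {v : MetallicVertex a n} (hv : v ∈ blockClass a S)
    {i : Fin n} (hi : i ∈ freePositions S) : (v.1 i : ℕ) < a := by
  have := (v.1 i).isLt
  have := (hv i).not.mpr (notMem_of_mem_freePositions hi)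
  omega

lemma val_eq_of_notMem_freePositions {u v : MetallicVertex a n} (hu : u ∈ blockClass a S)
    (hv : v ∈ blockClass a S) {i : Fin n} (hi : i ∉ freePositions S) : u.1 i = v.1 i := by
  rcases mem_union.mp (not_not.mp (mem_compl.not.mp hi)) with hiS | hiZ
  · exact Fin.ext (((hu i).mpr hiS).trans ((hv i).mpr hiS).symm)
  · exact Fin.ext ((val_eq_zero_of_mem_zeroPositions hu hiZ).trans
      (val_eq_zero_of_mem_zeroPositions hv hiZ).symm)

def fillBlocks (S : Finset (Fin n)) (f : freePositions S → Fin a) (i : Fin n) : Fin (a + 1) :=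
  if h : i ∈ freePositions S then (f ⟨i, h⟩).castSucc else if i ∈ S then Fin.last a else 0

lemma fillBlocks_val_eq_iff (ha : 1 ≤ a) (f : freePositions S → Fin a) (i : Fin n) :
    (fillBlocks S f i : ℕ) = a ↔ i ∈ S := by
  unfold fillBlocks
  split_ifs with hfree hiS
  · simp [(f _).isLt.ne, notMem_of_mem_freePositions hfree]
  · simpa
  · exact iff_of_false (by rw [Fin.val_zero]; omega) hiS

lemma metallicOK_fillBlocks (ha : 1 ≤ a) (hS : ValidPlacement n S)
    (f : freePositions S → Fin a) : MetallicOK a n (fillBlocks S f) := by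
  intro i hi
  have hiS := (fillBlocks_val_eq_iff ha f i).mp hi
  have hpos := hS.1 i hiS
  let j : Fin n := ⟨i - 1, by omega⟩
  have hji : (j : ℕ) + 1 = i := Nat.sub_add_cancel hpos
  have hjZ : j ∈ zeroPositions S := mem_filter.mpr ⟨mem_univ _, i, hiS, hji⟩
  have hjS : j ∉ S := disjoint_right.mp (disjoint_zeroPositions hS) hjZ
  refine ⟨j, hji, ?_⟩
  simp [fillBlocks, freePositions, hjZ, hjS]

def blockClassEquiv (ha : 1 ≤ a) (hS : ValidPlacement n S) :
    blockClass a S ≃ (freePositions S → Fin a) where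
  toFun v i := (v.1.1 i).castLT (val_lt_of_mem_freePositions v.2 i.2)
  invFun f := ⟨⟨fillBlocks S f, metallicOK_fillBlocks ha hS f⟩, fillBlocks_val_eq_iff ha f⟩
  left_inv v := by
    ext i : 3
    by_cases hi : i ∈ freePositions S
    · simp [fillBlocks, hi]
    · exact val_eq_of_notMem_freePositions (u := ⟨_, metallicOK_fillBlocks ha hS _⟩)
        (fillBlocks_val_eq_iff ha _) v.2 hi
  right_inv f := by
    ext i
    simp [fillBlocks, i.2]

lemma sum_dist_eq_sum_freePositions {u v : MetallicVertex a n} (hu : u ∈ blockClass a S)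
    (hv : v ∈ blockClass a S) :
    ∑ i, Nat.dist (u.1 i) (v.1 i) = ∑ i ∈ freePositions S, Nat.dist (u.1 i) (v.1 i) := by
  refine (sum_subset (subset_univ _) fun i _ hi => ?_).symm
  rw [val_eq_of_notMem_freePositions hu hv hi, Nat.dist_self]

theorem nonempty_induce_blockClass_iso_gridGraph (ha : 1 ≤ a) (hS : ValidPlacement n S) :
    Nonempty ((metallicCube a n).induce (blockClass a S) ≃g gridGraph a (n - 2 * #S)) := by
  let σ := (freePositions S).equivFinOfCardEq (card_freePositions hS)
  refine ⟨⟨(blockClassEquiv ha hS).trans (σ.arrowCongr (.refl _)), fun {u v} => ?_⟩⟩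
  change ∑ j, Nat.dist (u.1.1 (σ.symm j)) (v.1.1 (σ.symm j)) = 1 ↔
    ∑ i, Nat.dist (u.1.1 i) (v.1.1 i) = 1
  rw [sum_dist_eq_sum_freePositions u.2 v.2, ← sum_coe_sort (freePositions S),
    σ.symm.sum_comp fun i => Nat.dist (u.1.1 i) (v.1.1 i)]

end

end Metallic

/-- the vertex classes of `Π^a_n` given by the exact positions of the
`0a`-blocks induce grids `P_a^{n−2k}`; for each `k ≤ ⌊n/2⌋` there are `C(n−k,k)`
placements of `k` blocks, the classes partition the vertex set, and the total number of
classes is the Fibonacci number `F_{n+1}`. -/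
theorem metallic_grid_decomposition (a n : ℕ) (ha : 1 ≤ a) :
    (∀ S : Finset (Fin n), ValidPlacement n S →
      Nonempty ((metallicCube a n).induce {v | ∀ i : Fin n, (v.1 i : ℕ) = a ↔ i ∈ S}
        ≃g gridGraph a (n - 2 * S.card))) ∧
    (∀ k : ℕ, k ≤ n / 2 →
      (Finset.univ.filter fun S : Finset (Fin n) =>
        ValidPlacement n S ∧ S.card = k).card = Nat.choose (n - k) k) ∧
    (∀ v : MetallicVertex a n, ∃! S : Finset (Fin n),
      ValidPlacement n S ∧ ∀ i : Fin n, (v.1 i : ℕ) = a ↔ i ∈ S) ∧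
    (Finset.univ.filter fun S : Finset (Fin n) =>
      ValidPlacement n S).card = Nat.fib (n + 1) :=
  ⟨fun _ hS => Metallic.nonempty_induce_blockClass_iso_gridGraph ha hS,
    fun k _ => Metallic.card_validPlacement_card_eq n k,
    Metallic.existsUnique_validPlacement ha,
    Metallic.card_validPlacement n⟩
end

section
/- Let a ≥ 1 and n ≥ 1, and let ρ map each vertex α_1⋯α_n of Π^a_n to the binary string b_1⋯b_n where b_i = 1 if α_i = a and b_i = 0 otherwise. Then the quotient graph Π^a_n/ρ — whose vertices are the images ρ(v) for v ∈ V(Π^a_n), with two distinct images w_1, w_2 adjacent if and only if some vertex in ρ^{−1}(w_1) is adjacent in Π^a_n to some vertex in ρ^{−1}(w_2) — is isomorphic to the Fibonacci cube Γ_{n−1}. -/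
/-- Binary strings of length `m` with no two consecutive 1s. -/
def FibOK (m : ℕ) (b : Fin m → Bool) : Prop :=
  ∀ i j : Fin m, (j : ℕ) + 1 = (i : ℕ) → ¬(b i = true ∧ b j = true)

instance (m : ℕ) : DecidablePred (FibOK m) := fun b => by
  unfold FibOK; infer_instance

abbrev FibVertex (m : ℕ) : Type := {b : Fin m → Bool // FibOK m b}

/-- The Fibonacci cube `Γ_m`: two strings are adjacent iff they differ in exactly
one position. -/
def fibCube (m : ℕ) : SimpleGraph (FibVertex m) where
  Adj u v := (Finset.univ.filter fun i => u.1 i ≠ v.1 i).card = 1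
  symm := by
    constructor
    intro u v h
    simpa [ne_comm] using h
  loopless := by
    constructor
    intro u h
    simp at h

/-- The map `ρ` sending a vertex of `Π^a_n` to the binary string marking the
positions of the letter `a`. -/
def rho (a n : ℕ) (v : MetallicVertex a n) : Fin n → Bool :=
  fun i => decide ((v.1 i : ℕ) = a)

/-- The quotient graph `Π^a_n/ρ`: vertices are the images of `ρ`, and two distinct
images are adjacent iff some preimage of one is adjacent to some preimage of the other. -/
def metallicQuotient (a n : ℕ) :
    SimpleGraph {w : Fin n → Bool // ∃ v : MetallicVertex a n, rho a n v = w} where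
  Adj w₁ w₂ := w₁ ≠ w₂ ∧ ∃ u v : MetallicVertex a n,
    rho a n u = w₁.1 ∧ rho a n v = w₂.1 ∧ (metallicCube a n).Adj u v
  symm := by
    constructor
    rintro w₁ w₂ ⟨hne, u, v, hu, hv, hadj⟩
    exact ⟨hne.symm, v, u, hv, hu, hadj.symm⟩
  loopless := by
    constructor
    rintro w ⟨hne, -⟩
    exact hne rfl

/-!
The image of `ρ` consists of the strings that start with `0` and have no two consecutive `1`s,
so dropping the first letter identifies it with the vertex set of `Γ_{n-1}`. An edge of `Π^a_n`
changes a single letter by one, so it changes `ρ` in at most one position. Conversely, lowering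
a letter `a` to `a - 1` keeps the string admissible (a nonzero letter never serves as the `0`
that an `a` must follow), is an edge of `Π^a_n`, and flips exactly one bit of `ρ`. Hence two
images are adjacent in the quotient iff they are at Hamming distance one.
-/

open Finset Function

lemma hammingDist_le_sum_dist {ι : Type*} [Fintype ι] (x y : ι → ℕ) :
    hammingDist x y ≤ ∑ i, Nat.dist (x i) (y i) := by
  rw [hammingDist, card_filter]
  gcongr with i
  split_ifs with h
  · exact Nat.dist_pos_of_ne h
  · exact Nat.zero_le _

lemma exists_ne_and_forall_eq_of_hammingDist_eq_one {ι : Type*} [Fintype ι] {β : ι → Type*}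
    [∀ i, DecidableEq (β i)] {x y : ∀ i, β i} (h : hammingDist x y = 1) :
    ∃ i, x i ≠ y i ∧ ∀ j, j ≠ i → x j = y j := by
  obtain ⟨i, hi⟩ := card_eq_one.mp h
  have mem_iff (j : ι) : x j ≠ y j ↔ j = i := by
    simpa using congrArg (j ∈ ·) hi
  exact ⟨i, (mem_iff i).2 rfl, fun j hj => not_not.1 (mt (mem_iff j).1 hj)⟩

lemma hammingDist_eq_hammingDist_tail {n : ℕ} {β : Fin (n + 1) → Type*} [∀ i, DecidableEq (β i)]
    {x y : ∀ i, β i} (h₀ : x 0 = y 0) :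
    hammingDist x y = hammingDist (Fin.tail x) (Fin.tail y) := by
  simp only [hammingDist, card_filter, Fin.sum_univ_succ, h₀, ne_eq, not_true_eq_false, if_false,
    zero_add]
  rfl

lemma MetallicOK.update {a n : ℕ} {α : Fin n → Fin (a + 1)} (hα : MetallicOK a n α) {i : Fin n}
    (hi : (α i : ℕ) ≠ 0) {b : Fin (a + 1)} (hb : (b : ℕ) ≠ a) :
    MetallicOK a n (Function.update α i b) := by
  intro j hj
  have hji : j ≠ i := by
    rintro rfl
    exact hb (by simpa using hj)
  rw [update_of_ne hji] at hj
  obtain ⟨k, hkj, hk⟩ := hα j hj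
  have hki : k ≠ i := by
    rintro rfl
    exact hi hk
  exact ⟨k, hkj, by rwa [update_of_ne hki]⟩

lemma fibCube_adj_iff {m : ℕ} {b c : FibVertex m} :
    (fibCube m).Adj b c ↔ hammingDist b.1 c.1 = 1 :=
  Iff.rfl

section Metallic

variable {a : ℕ}

lemma exists_rho_eq_iff (ha : 1 ≤ a) {m : ℕ} {w : Fin (m + 1) → Bool} :
    (∃ v, rho a (m + 1) v = w) ↔ w 0 = false ∧ FibOK m (Fin.tail w) := by
  constructor
  · rintro ⟨v, rfl⟩
    refine ⟨?_, fun i j hji ⟨hi, hj⟩ => ?_⟩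
    · by_contra h
      obtain ⟨j, hj, -⟩ := v.2 0 (by simpa [rho] using h)
      simp at hj
    · obtain ⟨k, hk, hk0⟩ := v.2 i.succ (by simpa [rho, Fin.tail] using hi)
      have hkj : k = j.succ := Fin.ext (by simp only [Fin.val_succ] at hk ⊢; omega)
      have : (v.1 j.succ : ℕ) = a := by simpa [rho, Fin.tail] using hj
      rw [hkj] at hk0
      omega
  · rintro ⟨h₀, hfib⟩
    have hpred (i : Fin (m + 1)) (hi : w i = true) :
        ∃ j : Fin (m + 1), (j : ℕ) + 1 = i ∧ w j = false := by
      induction i using Fin.cases with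
      | zero => simp [h₀] at hi
      | succ k =>
        refine ⟨k.castSucc, by simp, ?_⟩
        by_contra hk
        have hk0 : (k : ℕ) ≠ 0 := fun h => by simp [show k.castSucc = 0 from Fin.ext h, h₀] at hk
        have hprev : (⟨k - 1, by omega⟩ : Fin m).succ = k.castSucc := Fin.ext (by simp; omega)
        exact hfib k ⟨k - 1, by omega⟩ (by simp; omega)
          ⟨hi, by simpa [Fin.tail, hprev] using hk⟩
    refine ⟨⟨fun i => if w i then Fin.last a else 0, fun i hi => ?_⟩, ?_⟩
    · have hwi : w i = true := by
        by_contra h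
        simp only [h, ↓reduceIte, Fin.coe_ofNat_eq_mod, Nat.zero_mod] at hi
        omega
      obtain ⟨j, hji, hj⟩ := hpred i hwi
      exact ⟨j, hji, by simp [hj]⟩
    · funext i
      cases h : w i
      · simp only [rho, h, Bool.false_eq_true, ↓reduceIte, Fin.coe_ofNat_eq_mod, Nat.zero_mod,
          decide_eq_false_iff_not]
        omega
      · simp [rho, h]

lemma exists_adj_rho_eq_update (ha : 1 ≤ a) {n : ℕ} (u : MetallicVertex a n) {i : Fin n}
    (hi : (u.1 i : ℕ) = a) :
    ∃ v, rho a n v = update (rho a n u) i false ∧ (metallicCube a n).Adj u v := by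
  let b : Fin (a + 1) := ⟨a - 1, by omega⟩
  have hb : (b : ℕ) ≠ a := show a - 1 ≠ a by omega
  refine ⟨⟨update u.1 i b, u.2.update (by omega) hb⟩, funext fun j => ?_, ?_⟩
  · by_cases hj : j = i
    · subst hj
      simpa [rho] using hb
    · simp [rho, update_of_ne hj]
  · show ∑ j, Nat.dist (u.1 j : ℕ) (update u.1 i b j : ℕ) = 1
    rw [sum_eq_single i (fun j _ hj => by simp [update_of_ne hj]) (by simp)]
    rw [update_self, hi, Nat.dist_eq_sub_of_le_right (by simp [b])]
    show a - (a - 1) = 1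
    omega

lemma exists_adj_of_forall_eq_of_ne (ha : 1 ≤ a) {n : ℕ} {x y : Fin n → Bool}
    (hx : ∃ u, rho a n u = x) (hy : ∃ v, rho a n v = y) {i : Fin n} (hi : x i ≠ y i)
    (hoff : ∀ j, j ≠ i → x j = y j) :
    ∃ u v, rho a n u = x ∧ rho a n v = y ∧ (metallicCube a n).Adj u v := by
  wlog hxi : x i = true generalizing x y
  · obtain ⟨v, u, hv, hu, hvu⟩ :=
      this hy hx hi.symm (fun j hj => (hoff j hj).symm) (by simpa [hxi] using hi.symm)
    exact ⟨u, v, hu, hv, hvu.symm⟩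
  obtain ⟨u, rfl⟩ := hx
  have hy : y = update (rho a n u) i false := funext fun j => by
    by_cases hj : j = i
    · subst hj
      simpa [hxi] using hi.symm
    · rw [update_of_ne hj, hoff j hj]
  obtain ⟨v, hv, huv⟩ := exists_adj_rho_eq_update ha u (by simpa [rho] using hxi)
  exact ⟨u, v, rfl, hv.trans hy.symm, huv⟩

theorem metallicQuotient_adj_iff (ha : 1 ≤ a) {n : ℕ} {w₁ w₂ : {w // ∃ v, rho a n v = w}} :
    (metallicQuotient a n).Adj w₁ w₂ ↔ hammingDist w₁.1 w₂.1 = 1 := by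
  obtain ⟨x, hx⟩ := w₁
  obtain ⟨y, hy⟩ := w₂
  constructor
  · rintro ⟨hne, u, v, rfl, rfl, huv⟩
    have hpos : 0 < hammingDist (rho a n u) (rho a n v) :=
      hammingDist_pos.2 fun h => hne (Subtype.ext h)
    have hle : hammingDist (rho a n u) (rho a n v) ≤ 1 := calc
      _ ≤ hammingDist (fun i => (u.1 i : ℕ)) (fun i => (v.1 i : ℕ)) :=
          hammingDist_comp_le_hammingDist fun _ k => decide (k = a)
      _ ≤ ∑ i, Nat.dist (u.1 i : ℕ) (v.1 i : ℕ) := hammingDist_le_sum_dist _ _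
      _ = 1 := huv
    exact le_antisymm hle hpos
  · intro h
    obtain ⟨i, hi, hoff⟩ := exists_ne_and_forall_eq_of_hammingDist_eq_one h
    exact ⟨fun he => hi (by cases he; rfl), exists_adj_of_forall_eq_of_ne ha hx hy hi hoff⟩

def rangeRhoEquivFibVertex (ha : 1 ≤ a) (m : ℕ) :
    {w // ∃ v, rho a (m + 1) v = w} ≃ FibVertex m where
  toFun w := ⟨Fin.tail w.1, ((exists_rho_eq_iff ha).1 w.2).2⟩
  invFun b := ⟨Fin.cons false b.1, (exists_rho_eq_iff ha).2 ⟨rfl, b.2⟩⟩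
  left_inv w := Subtype.ext <| by
    show Fin.cons false (Fin.tail w.1) = w.1
    rw [← ((exists_rho_eq_iff ha).1 w.2).1, Fin.cons_self_tail]
  right_inv b := Subtype.ext <| Fin.tail_cons (α := fun _ => Bool) false b.1

end Metallic

/-- the quotient graph `Π^a_n/ρ` is isomorphic to the Fibonacci cube
`Γ_{n−1}`. -/
theorem metallic_quotient_iso_fibCube (a n : ℕ) (ha : 1 ≤ a) (hn : 1 ≤ n) :
    Nonempty (metallicQuotient a n ≃g fibCube (n - 1)) := by
  obtain ⟨m, rfl⟩ := Nat.exists_eq_add_of_le' hn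
  rw [Nat.add_sub_cancel]
  refine ⟨⟨rangeRhoEquivFibVertex ha m, fun {w₁ w₂} => ?_⟩⟩
  have h₀ : w₁.1 0 = w₂.1 0 := by
    rw [((exists_rho_eq_iff ha).1 w₁.2).1, ((exists_rho_eq_iff ha).1 w₂.2).1]
  rw [fibCube_adj_iff, metallicQuotient_adj_iff ha, hammingDist_eq_hammingDist_tail h₀]
  rfl
end

section
/- Every metallic cube is isomorphic to an induced subgraph of a Fibonacci cube, and hence of a hypercube. Specifically: for a ≥ 3 and n ≥ 1, Π^a_n is isomorphic to an induced subgraph of the Fibonacci cube Γ_{(2a−2)n − 1}; for a = 2 and n ≥ 1, Π^2_n is isomorphic to an induced subgraph of Γ_{3n−1}; and Π^1_n is isomorphic to Γ_{n−1}. -/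
/-!
Each letter `c ∈ {0,…,a}` is encoded by a Fibonacci string of length `L` (`L = 2a − 2` for
`a ≥ 3`, `L = 3` for `a = 2`): `0 ↦ 010…0`, `1 ↦ 00…0` and `c ≥ 2 ↦ (10)^(c−1)0…0`. Going from
`c` to `c + 1` flips a single bit, one on which all letters `≤ c` agree, so the code words of `c`
and `d` are at Hamming distance `|c − d|`. All code words end in `0`, hence concatenating the code
words of the letters of a string and dropping the final `0` is a Fibonacci string of length
`Ln − 1`, and this map turns the `ℓ¹` distance of strings into Hamming distance: it is an induced
embedding. For `a = 1` the letter `1` only occurs right after a `0`, so a vertex of `Π¹ₙ` is a `0`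
followed by a Fibonacci string of length `n − 1`.
-/

open Finset

namespace Metallic

def codeBit (c k : ℕ) : Bool :=
  decide (c = 0 ∧ k = 1 ∨ c ≠ 0 ∧ k % 2 = 0 ∧ k + 4 ≤ 2 * c)

def flipPos (d : ℕ) : ℕ := if d = 0 then 1 else 2 * d - 2

lemma codeBit_succ_of_ne_flipPos {d k : ℕ} (hk : k ≠ flipPos d) :
    codeBit (d + 1) k = codeBit d k := by
  unfold flipPos at hk
  simp only [codeBit, decide_eq_decide]
  split_ifs at hk <;> omega

lemma codeBit_succ_flipPos_ne (d : ℕ) :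
    codeBit (d + 1) (flipPos d) ≠ codeBit d (flipPos d) := by
  unfold flipPos
  split_ifs <;> simp only [codeBit, ne_eq, decide_eq_decide, and_true] <;> omega

lemma codeBit_flipPos_of_le {c d : ℕ} (h : c ≤ d) :
    codeBit c (flipPos d) = codeBit d (flipPos d) := by
  unfold flipPos
  split_ifs <;> simp only [codeBit, decide_eq_decide, and_true] <;> omega

lemma codeBit_eq_false_of_le {a c k : ℕ} (hc : c ≤ a) (hk : 2 ≤ k) (hka : 2 * a ≤ k + 3) :
    codeBit c k = false := by
  simp only [codeBit, decide_eq_false_iff_not]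
  omega

lemma not_codeBit_and_codeBit_succ (c k : ℕ) : ¬(codeBit c k ∧ codeBit c (k + 1)) := by
  simp only [codeBit, decide_eq_true_eq]
  omega

def codeDist (L c d : ℕ) : ℕ := #{k ∈ range L | codeBit c k ≠ codeBit d k}

lemma codeDist_comm (L c d : ℕ) : codeDist L c d = codeDist L d c := by
  simp only [codeDist, ne_comm]

lemma codeDist_succ {L c d : ℕ} (hcd : c ≤ d) (hL : flipPos d < L) :
    codeDist L c (d + 1) = codeDist L c d + 1 := by
  have hflip := codeBit_flipPos_of_le hcd
  have hset : {k ∈ range L | codeBit c k ≠ codeBit (d + 1) k} =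
      insert (flipPos d) {k ∈ range L | codeBit c k ≠ codeBit d k} := by
    ext k
    by_cases hk : k = flipPos d
    · subst hk
      simpa [hL, hflip] using (codeBit_succ_flipPos_ne d).symm
    · simp [hk, codeBit_succ_of_ne_flipPos hk]
  rw [codeDist, hset, card_insert_of_notMem (by simp [hflip])]
  rfl

lemma codeDist_eq_sub {L c d : ℕ} (hcd : c ≤ d) (hL : ∀ e < d, flipPos e < L) :
    codeDist L c d = d - c := by
  induction d, hcd using Nat.le_induction with
  | base => simp [codeDist]
  | succ d hcd ih =>
    rw [codeDist_succ hcd (hL d (by omega)), ih fun e he => hL e (by omega)]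
    omega

lemma codeDist_eq_dist {L a c d : ℕ} (hL : 2 ≤ L) (ha : 2 * a ≤ L + 3) (hc : c ≤ a)
    (hd : d ≤ a) : codeDist L c d = Nat.dist c d := by
  have hflip : ∀ e < a, flipPos e < L := fun e he => by unfold flipPos; split_ifs <;> omega
  rcases le_total c d with h | h
  · rw [codeDist_eq_sub h fun e he => hflip e (by omega), Nat.dist_eq_sub_of_le h]
  · rw [codeDist_comm, codeDist_eq_sub h fun e he => hflip e (by omega),
      Nat.dist_eq_sub_of_le_right h]

lemma sum_range_mul_eq_sum_sum {M : Type*} [AddCommMonoid M] (f : ℕ → M) (L n : ℕ) :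
    ∑ t ∈ range (L * n), f t = ∑ i ∈ range n, ∑ k ∈ range L, f (L * i + k) := by
  induction n with
  | zero => simp
  | succ n ih => rw [Nat.mul_succ, sum_range_add, ih, sum_range_succ]

/-- Bit `t` of the concatenation of the length-`L` code words of `x 0, x 1, …`. -/
def concatBit (L : ℕ) (x : ℕ → ℕ) (t : ℕ) : Bool := codeBit (x (t / L)) (t % L)

lemma concatBit_mul_add {L k : ℕ} (x : ℕ → ℕ) (i : ℕ) (hk : k < L) :
    concatBit L x (L * i + k) = codeBit (x i) k := by
  rw [concatBit, Nat.mul_add_div (by omega), Nat.div_eq_of_lt hk, add_zero,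
    Nat.mul_add_mod, Nat.mod_eq_of_lt hk]

section Concat

variable {a L : ℕ} {x y : ℕ → ℕ}

lemma fibOK_concatBit {m : ℕ} (hL : 3 ≤ L) (ha : 2 * a ≤ L + 2) (hx : ∀ i, x i ≤ a) :
    FibOK m fun t : Fin m => concatBit L x t := by
  rintro s t hts ⟨hs, ht⟩
  obtain ⟨q, r, hr, htqr⟩ : ∃ q r, r < L ∧ (t : ℕ) = L * q + r :=
    ⟨t / L, t % L, Nat.mod_lt _ (by omega), (Nat.div_add_mod t L).symm⟩
  rw [htqr] at hts
  simp only [htqr, concatBit_mul_add x q hr] at ht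
  by_cases hlast : r = L - 1
  · rw [hlast, codeBit_eq_false_of_le (hx q) (by omega) (by omega)] at ht
    exact Bool.false_ne_true ht
  · simp only [← hts, add_assoc, concatBit_mul_add x q (by omega : r + 1 < L)] at hs
    exact not_codeBit_and_codeBit_succ _ _ ⟨ht, hs⟩

lemma card_concatBit_ne (n : ℕ) (hL : 2 ≤ L) (ha : 2 * a ≤ L + 3) (hx : ∀ i, x i ≤ a)
    (hy : ∀ i, y i ≤ a) :
    #{t ∈ range (L * n) | concatBit L x t ≠ concatBit L y t} =
      ∑ i ∈ range n, Nat.dist (x i) (y i) := by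
  rw [card_filter, sum_range_mul_eq_sum_sum]
  refine sum_congr rfl fun i _ => ?_
  rw [← codeDist_eq_dist hL ha (hx i) (hy i), codeDist, card_filter]
  refine sum_congr rfl fun k hk => ?_
  rw [concatBit_mul_add x i (mem_range.mp hk), concatBit_mul_add y i (mem_range.mp hk)]

lemma hammingDist_concatBit (n : ℕ) (hL : 3 ≤ L) (ha : 2 * a ≤ L + 2) (hx : ∀ i, x i ≤ a)
    (hy : ∀ i, y i ≤ a) :
    hammingDist (fun t : Fin (L * n - 1) => concatBit L x t) (fun t => concatBit L y t) =
      ∑ i ∈ range n, Nat.dist (x i) (y i) := by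
  rw [← card_concatBit_ne n (by omega) (by omega : 2 * a ≤ L + 3) hx hy, hammingDist,
    card_filter, card_filter,
    Fin.sum_univ_eq_sum_range (fun t => if concatBit L x t ≠ concatBit L y t then 1 else 0)]
  rcases n with _ | n
  · simp
  · have hlast : L * (n + 1) - 1 = L * n + (L - 1) := by rw [Nat.mul_succ]; omega
    have hpos : 0 < L * (n + 1) := by positivity
    rw [show L * (n + 1) = L * (n + 1) - 1 + 1 by omega, sum_range_succ, Nat.add_sub_cancel,
      hlast, concatBit_mul_add x n (by omega), concatBit_mul_add y n (by omega),
      codeBit_eq_false_of_le (hx n) (by omega) (by omega),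
      codeBit_eq_false_of_le (hy n) (by omega) (by omega)]
    simp

end Concat

section Embedding

variable {a n m : ℕ}

def embeddingOfHammingDist (f : MetallicVertex a n → FibVertex m)
    (hf : ∀ α β, hammingDist (f α).1 (f β).1 = ∑ i, Nat.dist (α.1 i : ℕ) (β.1 i)) :
    metallicCube a n ↪g fibCube m where
  toFun := f
  inj' := by
    intro α β h
    have hdist := hf α β
    rw [h, hammingDist_self, eq_comm, sum_eq_zero_iff] at hdist
    exact Subtype.ext <| funext fun i => Fin.ext <| Nat.eq_of_dist_eq_zero (hdist i (mem_univ _))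
  map_rel_iff' {α β} := by
    change hammingDist (f α).1 (f β).1 = 1 ↔ _
    rw [hf]
    rfl

def isoOfHammingDist (e : MetallicVertex a n ≃ FibVertex m)
    (he : ∀ α β, hammingDist (e α).1 (e β).1 = ∑ i, Nat.dist (α.1 i : ℕ) (β.1 i)) :
    metallicCube a n ≃g fibCube m :=
  { e with map_rel_iff' := (embeddingOfHammingDist e he).map_rel_iff }

def digitAt (α : MetallicVertex a n) (i : ℕ) : ℕ := if h : i < n then α.1 ⟨i, h⟩ else 0

lemma digitAt_le (α : MetallicVertex a n) (i : ℕ) : digitAt α i ≤ a := by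
  unfold digitAt
  split_ifs
  exacts [Fin.is_le _, Nat.zero_le a]

lemma sum_range_dist_digitAt (α β : MetallicVertex a n) :
    ∑ i ∈ range n, Nat.dist (digitAt α i) (digitAt β i) =
      ∑ i, Nat.dist (α.1 i : ℕ) (β.1 i) := by
  rw [← Fin.sum_univ_eq_sum_range]
  simp [digitAt]

theorem nonempty_embedding_fibCube {L : ℕ} (hL : 3 ≤ L) (ha : 2 * a ≤ L + 2) :
    Nonempty (metallicCube a n ↪g fibCube (L * n - 1)) :=
  ⟨embeddingOfHammingDist
    (fun α => ⟨fun t => concatBit L (digitAt α) t, fibOK_concatBit hL ha (digitAt_le α)⟩)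
    fun α β => by
      rw [hammingDist_concatBit n hL ha (digitAt_le α) (digitAt_le β), sum_range_dist_digitAt]⟩

end Embedding

section One

variable {m : ℕ}

lemma val_zero_eq_zero (α : MetallicVertex 1 (m + 1)) : α.1 0 = 0 := by
  have hval : ∀ x : Fin 2, x ≠ 0 → (x : ℕ) = 1 := by decide
  by_contra h
  obtain ⟨j, hj, -⟩ := α.2 0 (hval _ h)
  simp at hj

lemma fibOK_tail (α : MetallicVertex 1 (m + 1)) :
    FibOK m fun k => decide ((α.1 k.succ : ℕ) = 1) := by
  rintro i j hji ⟨hi, hj⟩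
  obtain ⟨j', hj', hj'0⟩ := α.2 i.succ (of_decide_eq_true hi)
  have : j' = j.succ := Fin.ext (by simp only [Fin.val_succ] at hj' ⊢; omega)
  simp_all

lemma metallicOK_cons (b : FibVertex m) :
    MetallicOK 1 (m + 1) (Fin.cons 0 fun k => if b.1 k then 1 else 0) := by
  intro i hi
  induction i using Fin.cases with
  | zero => simp at hi
  | succ k =>
    have hbk : b.1 k = true := by cases h : b.1 k <;> simp_all
    refine ⟨k.castSucc, rfl, ?_⟩
    by_cases hk : (k : ℕ) = 0
    · rw [show k.castSucc = 0 from Fin.ext hk]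
      rfl
    · set p : Fin m := ⟨k - 1, by omega⟩
      have hp : b.1 p = false := by simpa [hbk] using b.2 k p (by simp [p]; omega)
      rw [show k.castSucc = p.succ from Fin.ext (by simp [p]; omega), Fin.cons_succ, hp]
      rfl

def vertexOneEquiv (m : ℕ) : MetallicVertex 1 (m + 1) ≃ FibVertex m where
  toFun α := ⟨fun k => decide ((α.1 k.succ : ℕ) = 1), fibOK_tail α⟩
  invFun b := ⟨Fin.cons 0 fun k => if b.1 k then 1 else 0, metallicOK_cons b⟩
  left_inv α := by
    refine Subtype.ext <| funext fun i => ?_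
    induction i using Fin.cases with
    | zero => exact (val_zero_eq_zero α).symm
    | succ k =>
      have hbit : ∀ x : Fin 2, (if decide ((x : ℕ) = 1) then 1 else 0) = x := by decide
      exact hbit _
  right_inv b := by
    refine Subtype.ext <| funext fun k => ?_
    cases h : b.1 k <;> simp [h]

lemma hammingDist_vertexOneEquiv (α β : MetallicVertex 1 (m + 1)) :
    hammingDist (vertexOneEquiv m α).1 (vertexOneEquiv m β).1 =
      ∑ i, Nat.dist (α.1 i : ℕ) (β.1 i) := by
  have hbit : ∀ x y : Fin 2,
      (if decide ((x : ℕ) = 1) ≠ decide ((y : ℕ) = 1) then 1 else 0) = Nat.dist x y := by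
    decide
  rw [Fin.sum_univ_succ, val_zero_eq_zero α, val_zero_eq_zero β, Fin.val_zero, Nat.dist_self,
    zero_add, hammingDist, card_filter]
  exact sum_congr rfl fun k _ => hbit _ _

def vertexZeroEquiv (a : ℕ) : MetallicVertex a 0 ≃ FibVertex 0 where
  toFun _ := ⟨finZeroElim, fun i => i.elim0⟩
  invFun _ := ⟨finZeroElim, fun i => i.elim0⟩
  left_inv _ := Subsingleton.elim _ _
  right_inv _ := Subsingleton.elim _ _

end One

end Metallic

theorem metallic_embeds_in_fibCube_general (a n : ℕ) :
    (3 ≤ a → Nonempty (metallicCube a n ↪g fibCube ((2 * a - 2) * n - 1))) ∧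
    (a = 2 → Nonempty (metallicCube 2 n ↪g fibCube (3 * n - 1))) ∧
    (a = 1 → Nonempty (metallicCube 1 n ≃g fibCube (n - 1))) := by
  refine ⟨fun ha => Metallic.nonempty_embedding_fibCube (by omega) (by omega),
    fun _ => Metallic.nonempty_embedding_fibCube le_rfl (by norm_num), ?_⟩
  rintro rfl
  cases n with
  | zero =>
    exact ⟨Metallic.isoOfHammingDist (Metallic.vertexZeroEquiv 1) fun _ _ => by simp [hammingDist]⟩
  | succ m =>
    exact ⟨Metallic.isoOfHammingDist (Metallic.vertexOneEquiv m)
      Metallic.hammingDist_vertexOneEquiv⟩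

/-- every metallic cube is isomorphic to an induced subgraph of a Fibonacci
cube (hence of a hypercube): `Π^a_n ↪ Γ_{(2a−2)n−1}` for `a ≥ 3`, `Π^2_n ↪ Γ_{3n−1}`,
and `Π^1_n ≅ Γ_{n−1}`. -/
theorem metallic_embeds_in_fibCube (a n : ℕ) (ha : 1 ≤ a) (hn : 1 ≤ n) :
    (3 ≤ a → Nonempty (metallicCube a n ↪g fibCube ((2 * a - 2) * n - 1))) ∧
    (a = 2 → Nonempty (metallicCube 2 n ↪g fibCube (3 * n - 1))) ∧
    (a = 1 → Nonempty (metallicCube 1 n ≃g fibCube (n - 1))) :=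
  metallic_embeds_in_fibCube_general a n
end

section
/- Let e^a_n denote the number of edges and s^a_n the number of vertices of the metallic cube Π^a_n. Then e^a_0 = 0, e^a_1 = a − 1, and for every n ≥ 2, e^a_n = a·e^a_{n−1} + e^a_{n−2} + s^a_n − s^a_{n−1}. -/
/-!
Split a string by its first letter. The vertices of `Π^a_{n+1}` beginning with `c` are `c`
followed by a vertex of `Π^a_n` when `0 < c < a`, none when `c = a`, and `0` followed by a string
of the relaxed family `R_n` (where `a` may also stand first) when `c = 0`; the strings of `R_{n+1}`
split in the same way, every first letter `c ≠ 0` being followed by a vertex of `Π^a_n`. Two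
strings with different first letters are adjacent exactly when the letters differ by one and the
tails agree. Counting vertices and ordered adjacent pairs fibrewise gives first-order recurrences
for `s_n`, `2 e_n` and the corresponding counts for `R_n`; eliminating `R_n` gives the theorem.
-/

open Finset

namespace MetallicCube

section Strings

variable {X : Type*} [Fintype X] {k m n : ℕ}

lemma sum_fun_fin_succ {M : Type*} [AddCommMonoid M] (f : (Fin (n + 1) → X) → M) :
    ∑ β, f β = ∑ c, ∑ α, f (Fin.cons c α) := by
  rw [← (Fin.consEquiv fun _ => X).sum_comp, Fintype.sum_prod_type]
  rfl

lemma card_subtype_fun_fin_succ (P : (Fin (n + 1) → X) → Prop) [DecidablePred P] :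
    Fintype.card {β // P β} = ∑ c, Fintype.card {α // P (Fin.cons c α)} := by
  simp only [Fintype.card_subtype, card_filter]
  exact sum_fun_fin_succ _

lemma sum_sum_ite_dist_eq_one {M : Type*} [AddCommMonoid M] (g : Fin (m + 1) → Fin (m + 1) → M) :
    ∑ c : Fin (m + 1), ∑ d : Fin (m + 1), (if Nat.dist c d = 1 then g c d else 0) =
      ∑ i : Fin m, (g i.castSucc i.succ + g i.succ i.castSucc) := by
  have succ_sum (h : Fin (m + 1) → Fin (m + 1) → M) :
      ∑ c : Fin (m + 1), ∑ d : Fin (m + 1), (if (d : ℕ) = c + 1 then h c d else 0) =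
        ∑ i : Fin m, h i.castSucc i.succ := by
    have last_sum : ∑ d : Fin (m + 1), (if (d : ℕ) = m + 1 then h (Fin.last m) d else 0) = 0 :=
      sum_eq_zero fun d _ => if_neg d.isLt.ne
    rw [Fin.sum_univ_castSucc, Fin.val_last, last_sum, add_zero]
    simp_rw [Fin.val_castSucc, ← Fin.val_succ, ← Fin.ext_iff, sum_ite_eq', mem_univ, if_true]
  have split (c d : Fin (m + 1)) : (if Nat.dist c d = 1 then g c d else 0) =
      (if (d : ℕ) = c + 1 then g c d else 0) + (if (c : ℕ) = d + 1 then g c d else 0) := by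
    unfold Nat.dist
    split_ifs <;> first | omega | simp
  simp_rw [split, sum_add_distrib, succ_sum g]
  rw [sum_comm, succ_sum fun c d => g d c]

def l1Dist (α β : Fin n → Fin k) : ℕ := ∑ i, Nat.dist (α i) (β i)

lemma l1Dist_eq_zero_iff {α β : Fin n → Fin k} : l1Dist α β = 0 ↔ α = β := by
  simp only [l1Dist, sum_eq_zero_iff, mem_univ, true_implies, funext_iff, Fin.ext_iff]
  exact forall_congr' fun _ => ⟨Nat.eq_of_dist_eq_zero, Nat.dist_eq_zero⟩

lemma l1Dist_cons (c d : Fin k) (α β : Fin n → Fin k) :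
    l1Dist (Fin.cons c α : Fin (n + 1) → Fin k) (Fin.cons d β) = Nat.dist c d + l1Dist α β := by
  simp [l1Dist, Fin.sum_univ_succ]

def unitPairCount (P : (Fin n → Fin k) → Prop) [DecidablePred P] : ℕ :=
  Fintype.card {p : (Fin n → Fin k) × (Fin n → Fin k) // P p.1 ∧ P p.2 ∧ l1Dist p.1 p.2 = 1}

lemma unitPairCount_eq_sum (P : (Fin n → Fin k) → Prop) [DecidablePred P] :
    unitPairCount P = ∑ α, ∑ β, if P α ∧ P β ∧ l1Dist α β = 1 then 1 else 0 := by
  rw [unitPairCount, Fintype.card_subtype, card_filter, Fintype.sum_prod_type]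

lemma unitPairCount_congr {P Q : (Fin n → Fin k) → Prop} [DecidablePred P] [DecidablePred Q]
    (h : ∀ α, P α ↔ Q α) : unitPairCount P = unitPairCount Q :=
  Fintype.card_congr (Equiv.subtypeEquivRight fun p => by rw [h, h])

lemma unitPairCount_fin_zero (P : (Fin 0 → Fin k) → Prop) [DecidablePred P] :
    unitPairCount P = 0 :=
  Fintype.card_eq_zero_iff.2 ⟨fun p => by simpa [l1Dist] using p.2.2.2⟩

lemma sum_sum_ite_cons_l1Dist_eq_one (P : (Fin (n + 1) → Fin k) → Prop) [DecidablePred P]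
    (c d : Fin k) :
    (∑ α, ∑ β, if P (Fin.cons c α) ∧ P (Fin.cons d β) ∧ Nat.dist c d + l1Dist α β = 1
      then 1 else 0) =
      (if c = d then unitPairCount (fun α => P (Fin.cons c α)) else 0) +
      (if Nat.dist c d = 1 then Fintype.card {α // P (Fin.cons c α) ∧ P (Fin.cons d α)}
        else 0) := by
  obtain rfl | hcd := eq_or_ne c d
  · simp [unitPairCount_eq_sum]
  have hdist : Nat.dist c d ≠ 0 := fun h => hcd (Fin.ext (Nat.eq_of_dist_eq_zero h))
  obtain hdist | hdist : Nat.dist c d = 1 ∨ 2 ≤ Nat.dist c d := by omega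
  · rw [if_neg hcd, if_pos hdist, zero_add, Fintype.card_subtype, card_filter]
    refine sum_congr rfl fun α _ => ?_
    simp only [hdist, Nat.add_eq_left, l1Dist_eq_zero_iff, and_comm (b := α = _), ite_and]
    split_ifs <;> simp [*]
  · have hne (α β : Fin n → Fin k) : Nat.dist c d + l1Dist α β ≠ 1 := by omega
    simp [hcd, hne, show Nat.dist c d ≠ 1 by omega]

lemma unitPairCount_fin_succ (P : (Fin (n + 1) → Fin (m + 1)) → Prop) [DecidablePred P] :
    unitPairCount P = ∑ c, unitPairCount (fun α => P (Fin.cons c α)) +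
      2 * ∑ i : Fin m, Fintype.card {α // P (Fin.cons i.castSucc α) ∧ P (Fin.cons i.succ α)} := by
  rw [unitPairCount_eq_sum, sum_fun_fin_succ]
  simp_rw [sum_fun_fin_succ (fun β => if P _ ∧ P β ∧ _ then _ else _), l1Dist_cons]
  rw [sum_congr rfl fun c _ => sum_comm]
  simp_rw [sum_sum_ite_cons_l1Dist_eq_one, sum_add_distrib, sum_ite_eq, if_pos (mem_univ _)]
  rw [sum_sum_ite_dist_eq_one (fun c d => Fintype.card {α // P (Fin.cons c α) ∧ P (Fin.cons d α)}),
    two_mul, ← sum_add_distrib]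
  congr 1
  refine sum_congr rfl fun i _ => congrArg _ ?_
  exact Fintype.card_congr (Equiv.subtypeEquivRight fun α => and_comm)

end Strings

section Fibres

variable {a n : ℕ}

/-- Every `a` that is not the first letter follows a `0`; for `a ≠ 0` these are the strings `α`
such that `0 :: α` is a vertex of `Π^a_{n+1}`. -/
def Relaxed (a n : ℕ) (α : Fin n → Fin (a + 1)) : Prop :=
  ∀ i j : Fin n, (j : ℕ) + 1 = i → (α i : ℕ) = a → (α j : ℕ) = 0

instance (a n : ℕ) : DecidablePred (Relaxed a n) := fun α => by
  unfold Relaxed; infer_instance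

lemma metallicOK_iff {α : Fin n → Fin (a + 1)} :
    MetallicOK a n α ↔ (∀ i : Fin n, (i : ℕ) = 0 → (α i : ℕ) ≠ a) ∧ Relaxed a n α := by
  constructor
  · intro h
    refine ⟨fun i hi hia => ?_, fun i j hji hia => ?_⟩
    · obtain ⟨j, hj, -⟩ := h i hia
      omega
    · obtain ⟨j', hj', hj'0⟩ := h i hia
      rwa [Fin.ext (by omega : (j' : ℕ) = j)] at hj'0
  · rintro ⟨hhead, hrel⟩ i hia
    have hi : (i : ℕ) ≠ 0 := fun hi => hhead i hi hia
    exact ⟨⟨i - 1, by omega⟩, by simp; omega, hrel i _ (by simp; omega) hia⟩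

lemma relaxed_cons {c : Fin (a + 1)} {α : Fin n → Fin (a + 1)} :
    Relaxed a (n + 1) (Fin.cons c α) ↔
      (c ≠ 0 → ∀ i : Fin n, (i : ℕ) = 0 → (α i : ℕ) ≠ a) ∧ Relaxed a n α := by
  simp only [Relaxed, Fin.forall_fin_succ, Fin.cons_zero, Fin.cons_succ, Fin.val_zero,
    Fin.val_succ, Nat.add_right_cancel_iff, Nat.succ_ne_zero, false_implies, implies_true,
    true_and, forall_and, Fin.val_eq_zero_iff, and_congr_left_iff]
  exact fun _ => ⟨fun h hc i hi hia => hc (h i hi.symm hia),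
    fun h i hi hia => by_contra fun hc => h hc i hi.symm hia⟩

lemma metallicOK_cons {c : Fin (a + 1)} {α : Fin n → Fin (a + 1)} :
    MetallicOK a (n + 1) (Fin.cons c α) ↔ (c : ℕ) ≠ a ∧ Relaxed a (n + 1) (Fin.cons c α) := by
  rw [metallicOK_iff]
  simp

lemma relaxed_cons_zero {α : Fin n → Fin (a + 1)} :
    Relaxed a (n + 1) (Fin.cons 0 α) ↔ Relaxed a n α := by
  simp [relaxed_cons]

lemma relaxed_cons_of_ne_zero {c : Fin (a + 1)} (hc : c ≠ 0) {α : Fin n → Fin (a + 1)} :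
    Relaxed a (n + 1) (Fin.cons c α) ↔ MetallicOK a n α := by
  rw [relaxed_cons, metallicOK_iff, forall_prop_of_true hc]

lemma MetallicOK.relaxed_cons {α : Fin n → Fin (a + 1)} (h : MetallicOK a n α) (c : Fin (a + 1)) :
    Relaxed a (n + 1) (Fin.cons c α) :=
  MetallicCube.relaxed_cons.2 ⟨fun _ => (metallicOK_iff.1 h).1, (metallicOK_iff.1 h).2⟩

lemma metallicOK_cons_zero (ha : a ≠ 0) {α : Fin n → Fin (a + 1)} :
    MetallicOK a (n + 1) (Fin.cons 0 α) ↔ Relaxed a n α := by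
  rw [metallicOK_cons, relaxed_cons_zero, Fin.val_zero]
  exact and_iff_right ha.symm

lemma metallicOK_cons_of_ne {c : Fin (a + 1)} (h0 : c ≠ 0) (ha : (c : ℕ) ≠ a)
    {α : Fin n → Fin (a + 1)} : MetallicOK a (n + 1) (Fin.cons c α) ↔ MetallicOK a n α := by
  rw [metallicOK_cons, relaxed_cons_of_ne_zero h0]
  exact and_iff_right ha

lemma MetallicOK.cons {α : Fin n → Fin (a + 1)} (h : MetallicOK a n α) {c : Fin (a + 1)}
    (hc : (c : ℕ) ≠ a) : MetallicOK a (n + 1) (Fin.cons c α) :=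
  metallicOK_cons.2 ⟨hc, MetallicOK.relaxed_cons h c⟩

lemma not_metallicOK_cons_last (α : Fin n → Fin (a + 1)) :
    ¬MetallicOK a (n + 1) (Fin.cons (Fin.last a) α) := by
  simp [metallicOK_cons]

end Fibres

section Counts

variable (a b n : ℕ)

lemma card_metallicVertex_zero : Fintype.card (MetallicVertex a 0) = 1 := by
  simp [Fintype.card_subtype, MetallicOK]

lemma card_relaxed_succ : Fintype.card {α // Relaxed a (n + 1) α} =
    Fintype.card {α // Relaxed a n α} + a * Fintype.card (MetallicVertex a n) := by
  rw [card_subtype_fun_fin_succ, Fin.sum_univ_succ,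
    Fintype.card_congr (Equiv.subtypeEquivRight fun _ => relaxed_cons_zero),
    sum_congr rfl fun i _ => Fintype.card_congr
      (Equiv.subtypeEquivRight fun _ => relaxed_cons_of_ne_zero (Fin.succ_ne_zero i)),
    sum_const, card_univ, Fintype.card_fin, smul_eq_mul]

lemma unitPairCount_relaxed_succ : unitPairCount (Relaxed a (n + 1)) =
    unitPairCount (Relaxed a n) + a * unitPairCount (MetallicOK a n) +
      2 * (a * Fintype.card (MetallicVertex a n)) := by
  have cross (i : Fin a) : Fintype.card
      {α // Relaxed a (n + 1) (Fin.cons i.castSucc α) ∧ Relaxed a (n + 1) (Fin.cons i.succ α)} =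
        Fintype.card (MetallicVertex a n) :=
    Fintype.card_congr (Equiv.subtypeEquivRight fun _ => by
      rw [relaxed_cons_of_ne_zero (Fin.succ_ne_zero i)]
      exact and_iff_right_of_imp fun h => MetallicOK.relaxed_cons h _)
  rw [unitPairCount_fin_succ, Fin.sum_univ_succ, unitPairCount_congr fun _ => relaxed_cons_zero,
    sum_congr rfl fun i _ =>
      unitPairCount_congr fun _ => relaxed_cons_of_ne_zero (Fin.succ_ne_zero i),
    sum_congr rfl fun i _ => cross i]
  simp [add_assoc]

lemma card_metallicVertex_succ : Fintype.card (MetallicVertex (b + 1) (n + 1)) =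
    Fintype.card {α // Relaxed (b + 1) n α} + b * Fintype.card (MetallicVertex (b + 1) n) := by
  have fiber_zero : Fintype.card {α // MetallicOK (b + 1) (n + 1) (Fin.cons 0 α)} =
      Fintype.card {α // Relaxed (b + 1) n α} :=
    Fintype.card_congr (Equiv.subtypeEquivRight fun _ => metallicOK_cons_zero b.succ_ne_zero)
  have fiber_mid (j : Fin b) :
      Fintype.card {α // MetallicOK (b + 1) (n + 1) (Fin.cons j.castSucc.succ α)} =
        Fintype.card (MetallicVertex (b + 1) n) :=
    Fintype.card_congr (Equiv.subtypeEquivRight fun _ =>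
      metallicOK_cons_of_ne (Fin.succ_ne_zero _) (by simp; omega))
  have fiber_last :
      Fintype.card {α // MetallicOK (b + 1) (n + 1) (Fin.cons (Fin.last (b + 1)) α)} = 0 :=
    Fintype.card_eq_zero_iff.2 ⟨fun α => not_metallicOK_cons_last _ α.2⟩
  rw [card_subtype_fun_fin_succ, Fin.sum_univ_succ, Fin.sum_univ_castSucc, Fin.succ_last,
    fiber_zero, fiber_last, sum_congr rfl fun j _ => fiber_mid j]
  simp

lemma unitPairCount_metallicOK_succ : unitPairCount (MetallicOK (b + 1) (n + 1)) =
    unitPairCount (Relaxed (b + 1) n) + b * unitPairCount (MetallicOK (b + 1) n) +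
      2 * (b * Fintype.card (MetallicVertex (b + 1) n)) := by
  have fiber_mid (j : Fin b) (α : Fin n → Fin (b + 2)) :
      MetallicOK (b + 1) (n + 1) (Fin.cons j.castSucc.succ α) ↔ MetallicOK (b + 1) n α :=
    metallicOK_cons_of_ne (Fin.succ_ne_zero _) (by simp; omega)
  have fiber_last : unitPairCount (fun α : Fin n → Fin (b + 2) =>
      MetallicOK (b + 1) (n + 1) (Fin.cons (Fin.last (b + 1)) α)) = 0 :=
    Fintype.card_eq_zero_iff.2 ⟨fun p => not_metallicOK_cons_last _ p.2.1⟩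
  have cross_mid (j : Fin b) : Fintype.card {α // MetallicOK (b + 1) (n + 1)
      (Fin.cons j.castSucc.castSucc α) ∧ MetallicOK (b + 1) (n + 1) (Fin.cons j.castSucc.succ α)} =
        Fintype.card (MetallicVertex (b + 1) n) :=
    Fintype.card_congr (Equiv.subtypeEquivRight fun _ => by
      rw [fiber_mid]
      exact and_iff_right_of_imp fun h => MetallicOK.cons h (by simp; omega))
  have cross_last : Fintype.card {α // MetallicOK (b + 1) (n + 1)
      (Fin.cons (Fin.last b).castSucc α) ∧
        MetallicOK (b + 1) (n + 1) (Fin.cons (Fin.last (b + 1)) α)} = 0 :=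
    Fintype.card_eq_zero_iff.2 ⟨fun α => not_metallicOK_cons_last _ α.2.2⟩
  rw [unitPairCount_fin_succ, Fin.sum_univ_succ, Fin.sum_univ_castSucc, Fin.succ_last,
    unitPairCount_congr fun _ => metallicOK_cons_zero b.succ_ne_zero, fiber_last,
    sum_congr rfl fun j _ => unitPairCount_congr (fiber_mid j), Fin.sum_univ_castSucc,
    Fin.succ_last, cross_last,
    sum_congr rfl fun j _ => cross_mid j]
  simp [add_assoc]

lemma card_metallicVertex_add_two : Fintype.card (MetallicVertex (b + 1) (n + 2)) =
    (b + 1) * Fintype.card (MetallicVertex (b + 1) (n + 1)) +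
      Fintype.card (MetallicVertex (b + 1) n) := by
  have h₁ := card_metallicVertex_succ b n
  have h₂ := card_metallicVertex_succ b (n + 1)
  have hw := card_relaxed_succ (b + 1) n
  linarith

lemma unitPairCount_metallicOK_add_two : unitPairCount (MetallicOK (b + 1) (n + 2)) +
    2 * Fintype.card (MetallicVertex (b + 1) (n + 1)) =
      (b + 1) * unitPairCount (MetallicOK (b + 1) (n + 1)) + unitPairCount (MetallicOK (b + 1) n) +
        2 * Fintype.card (MetallicVertex (b + 1) (n + 2)) := by
  have h₁ := unitPairCount_metallicOK_succ b n
  have h₂ := unitPairCount_metallicOK_succ b (n + 1)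
  have hB := unitPairCount_relaxed_succ (b + 1) n
  have hs := card_metallicVertex_add_two b n
  linarith

lemma two_mul_card_edgeFinset_metallicCube :
    2 * #(metallicCube a n).edgeFinset = unitPairCount (MetallicOK a n) := by
  rw [← SimpleGraph.dart_card_eq_twice_card_edges]
  exact Fintype.card_congr
    { toFun d := ⟨(d.fst.1, d.snd.1), d.fst.2, d.snd.2, d.adj⟩
      invFun p := ⟨(⟨p.1.1, p.2.1⟩, ⟨p.1.2, p.2.2.1⟩), p.2.2.2⟩
      left_inv _ := rfl
      right_inv _ := rfl }

end Counts

end MetallicCube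

open MetallicCube

/-- `e^a_0 = 0`, `e^a_1 = a − 1`, and for `n ≥ 2`,
`e^a_n = a·e^a_{n−1} + e^a_{n−2} + s^a_n − s^a_{n−1}`. -/
theorem metallic_edge_recurrence (a : ℕ) (ha : 1 ≤ a) :
    (metallicCube a 0).edgeFinset.card = 0 ∧
    (metallicCube a 1).edgeFinset.card = a - 1 ∧
    ∀ n : ℕ, 2 ≤ n →
      ((metallicCube a n).edgeFinset.card : ℤ) =
        a * (metallicCube a (n - 1)).edgeFinset.card +
          (metallicCube a (n - 2)).edgeFinset.card +
          Fintype.card (MetallicVertex a n) -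
          Fintype.card (MetallicVertex a (n - 1)) := by
  obtain ⟨b, rfl⟩ : ∃ b, a = b + 1 := ⟨a - 1, by omega⟩
  refine ⟨?_, ?_, fun n hn => ?_⟩
  · have h := two_mul_card_edgeFinset_metallicCube (b + 1) 0
    rw [unitPairCount_fin_zero] at h
    omega
  · have h := two_mul_card_edgeFinset_metallicCube (b + 1) 1
    rw [unitPairCount_metallicOK_succ, unitPairCount_fin_zero, unitPairCount_fin_zero,
      card_metallicVertex_zero] at h
    omega
  · obtain ⟨n, rfl⟩ : ∃ m, n = m + 2 := ⟨n - 2, by omega⟩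
    have h := unitPairCount_metallicOK_add_two b n
    simp only [← two_mul_card_edgeFinset_metallicCube] at h
    rw [show n + 2 - 1 = n + 1 from rfl, show n + 2 - 2 = n from rfl]
    push_cast
    linarith
end

section
/- For every integer a ≥ 1 and n ≥ 1, the number of edges of the metallic cube Π^a_n equals Σ_{k=0}^{n} (−1)^{n+k} · ⌈(n+k)/2⌉ · C(⌊(n+k)/2⌋, k) · a^k. -/
/-!
Removing the first letter of a vertex of `Π^a_n` leaves a word that may start with `a` exactly
when the removed letter was `0`. Counting the words with this relaxed first letter alongside the
vertices, and likewise ordered pairs of adjacent words (which differ either in the first letter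
or in the rest), gives a linear system; eliminating the relaxed counts shows that the vertex
numbers satisfy the metallic recurrence `V(n+2) = a V(n+1) + V(n)` and that the edge numbers
satisfy `e(n+2) - a e(n+1) - e(n) = (a-1) V(n+1) + V(n)`.

The right-hand side is `P_n(a)` for `P_n = Σ_k w(n+k) C(⌊(n+k)/2⌋, k) X^k`, `w(m) = (-1)^m ⌈m/2⌉`.
By Pascal's rule `P_{n+2} - X P_{n+1} - P_n` has the same shape with weight
`w(m+2) - w(m) = (-1)^m`, and polynomials of that shape satisfy the metallic recurrence. So both
sides are annihilated by the square of `s ↦ s(n+2) - a s(n+1) - s(n)`, and it remains to compare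
initial values.
-/

open Finset Polynomial

section MetallicDiff

variable {R : Type*} [CommRing R]

def metallicDiff (c : R) (s : ℕ → R) (n : ℕ) : R := s (n + 2) - c * s (n + 1) - s n

theorem eq_of_metallicDiff_eq {c : R} {s t : ℕ → R} (h : metallicDiff c s = metallicDiff c t)
    (h0 : s 0 = t 0) (h1 : s 1 = t 1) : s = t := by
  funext n
  induction n using Nat.twoStepInduction with
  | zero => exact h0
  | one => exact h1
  | more n ih ih' =>
    have hn := congrFun h n
    simp only [metallicDiff] at hn
    linear_combination hn + c * ih' + ih

theorem eval_metallicDiff (p : ℕ → R[X]) (x : R) (n : ℕ) :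
    (metallicDiff X p n).eval x = metallicDiff x (fun n => (p n).eval x) n := by
  simp [metallicDiff]

end MetallicDiff

namespace Metallic

noncomputable def diagPoly (g : ℕ → ℤ) (n : ℕ) : ℤ[X] :=
  ∑ k ∈ range (n + 1), C (g (n + k) * ((n + k) / 2).choose k) * X ^ k

theorem coeff_diagPoly (g : ℕ → ℤ) (n k : ℕ) :
    (diagPoly g n).coeff k = g (n + k) * ((n + k) / 2).choose k := by
  rw [diagPoly, finsetSum_coeff]
  simp only [coeff_C_mul_X_pow, sum_ite_eq, mem_range]
  split_ifs with hk
  · rfl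
  · rw [Nat.choose_eq_zero_of_lt (by omega), Nat.cast_zero, mul_zero]

theorem eval_diagPoly (g : ℕ → ℤ) (n : ℕ) (x : ℤ) :
    (diagPoly g n).eval x = ∑ k ∈ range (n + 1), g (n + k) * ((n + k) / 2).choose k * x ^ k := by
  simp [diagPoly, eval_finsetSum]

theorem metallicDiff_diagPoly {g g' : ℕ → ℤ} (hg : ∀ m, g' (m + 2) = g (m + 2) - g m) (n : ℕ) :
    metallicDiff X (diagPoly g) n = diagPoly g' (n + 2) := by
  ext k
  cases k with
  | zero => simp [metallicDiff, coeff_diagPoly, hg]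
  | succ k =>
    simp only [metallicDiff, coeff_sub, coeff_X_mul, coeff_diagPoly]
    rw [show n + 2 + (k + 1) = n + k + 1 + 2 by omega, show n + 1 + k = n + k + 1 by omega,
      show n + (k + 1) = n + k + 1 by omega, hg, Nat.add_div_right _ two_pos,
      Nat.choose_succ_succ']
    push_cast
    ring

def edgeWeight (m : ℕ) : ℤ := (-1) ^ m * ((m + 1) / 2 : ℕ)

theorem metallicDiff_diagPoly_edgeWeight (n : ℕ) :
    metallicDiff X (diagPoly edgeWeight) n = diagPoly (fun m => (-1) ^ m) (n + 2) := by
  refine metallicDiff_diagPoly (fun m => ?_) n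
  rw [edgeWeight, edgeWeight, show (m + 2 + 1) / 2 = (m + 1) / 2 + 1 by omega]
  push_cast
  ring

theorem metallicDiff_diagPoly_negOnePow (n : ℕ) :
    metallicDiff X (diagPoly fun m => (-1) ^ m) n = 0 := by
  rw [metallicDiff_diagPoly (g' := fun _ => 0) (fun m => by ring)]
  simp [diagPoly]

abbrev Word (a n : ℕ) : Type := Fin n → Fin (a + 1)

/-- Every letter `a` of the word follows a `0`; a leading `a` is allowed exactly when `b`. -/
def Admissible (a : ℕ) : {n : ℕ} → Bool → Word a n → Prop
  | 0, _, _ => True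
  | _ + 1, b, α => ((α 0 : ℕ) = a → b) ∧ Admissible a ((α 0 : ℕ) = 0) (Fin.tail α)

instance Admissible.decidablePred (a : ℕ) :
    {n : ℕ} → (b : Bool) → DecidablePred (Admissible a (n := n) b)
  | 0, _ => fun _ => instDecidableTrue
  | _ + 1, _ => fun α =>
    haveI := Admissible.decidablePred a ((α 0 : ℕ) = 0) (Fin.tail α)
    instDecidableAnd

variable {a n : ℕ}

theorem admissible_cons {b : Bool} (x : Fin (a + 1)) (β : Word a n) :
    Admissible a b (Fin.cons x β : Word a (n + 1)) ↔
      ((x : ℕ) = a → b) ∧ Admissible a ((x : ℕ) = 0) β :=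
  Iff.rfl

theorem admissible_iff {b : Bool} (α : Word a n) :
    Admissible a b α ↔ ∀ i : Fin n, (α i : ℕ) = a →
      ((i : ℕ) = 0 ∧ b) ∨ ∃ j : Fin n, (j : ℕ) + 1 = i ∧ (α j : ℕ) = 0 := by
  induction n generalizing b with
  | zero => simp [Admissible]
  | succ n ih =>
    rw [← Fin.cons_self_tail α, admissible_cons, ih]
    simp [Fin.forall_fin_succ, Fin.exists_fin_succ, Fin.tail]

theorem metallicOK_iff_admissible (α : Word a n) : MetallicOK a n α ↔ Admissible a false α := by
  simp [MetallicOK, admissible_iff]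

theorem Admissible.of_false {b : Bool} {α : Word a n} (h : Admissible a false α) :
    Admissible a b α := by
  rw [admissible_iff] at h ⊢
  grind

theorem admissible_and_admissible {b₁ b₂ : Bool} (h : b₁ = false ∨ b₂ = false) (α : Word a n) :
    Admissible a b₁ α ∧ Admissible a b₂ α ↔ Admissible a false α := by
  refine ⟨fun ⟨h₁, h₂⟩ => ?_, fun h' => ⟨h'.of_false, h'.of_false⟩⟩
  rcases h with rfl | rfl <;> assumption

theorem sum_word_succ {M : Type*} [AddCommMonoid M] (f : Word a (n + 1) → M) :
    ∑ u, f u = ∑ x, ∑ β : Word a n, f (Fin.cons x β) := by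
  rw [← (Fin.consEquiv fun _ => Fin (a + 1)).sum_comp, Fintype.sum_prod_type]
  rfl

theorem sum_dist_cons (x y : Fin (a + 1)) (β γ : Word a n) :
    ∑ i, Nat.dist ((Fin.cons x β : Word a (n + 1)) i) ((Fin.cons y γ : Word a (n + 1)) i) =
      Nat.dist x y + ∑ i, Nat.dist (β i) (γ i) := by
  simp [Fin.sum_univ_succ]

theorem sum_dist_eq_zero_iff (β γ : Word a n) : ∑ i, Nat.dist (β i) (γ i) = 0 ↔ β = γ := by
  have hdist (x y : ℕ) : Nat.dist x y = 0 ↔ x = y := ⟨Nat.eq_of_dist_eq_zero, Nat.dist_eq_zero⟩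
  simp [Finset.sum_eq_zero_iff, funext_iff, Fin.ext_iff, hdist]

theorem sum_firstLetter {M : Type*} [AddCommMonoid M] (ha : 1 ≤ a) (b : Bool) (g : Bool → M) :
    ∑ x : Fin (a + 1), (if (x : ℕ) = a → b then g ((x : ℕ) = 0) else 0) =
      g true + (a - 1) • g false + if b then g false else 0 := by
  obtain ⟨a, rfl⟩ : ∃ a', a = a' + 1 := ⟨a - 1, by omega⟩
  rw [Fin.sum_univ_castSucc, Fin.sum_univ_succ]
  simp [fun x : Fin a => x.isLt.ne]

theorem sum_range_dist_eq_one (m : ℕ) :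
    ∑ x ∈ range m, ∑ y ∈ range m, (if Nat.dist x y = 1 then 1 else 0) = 2 * (m - 1) := by
  have hsplit (x y : ℕ) : (if Nat.dist x y = 1 then 1 else 0) =
      (if x + 1 = y then 1 else 0) + (if y + 1 = x then 1 else 0) := by
    unfold Nat.dist; split_ifs <;> omega
  simp_rw [hsplit, sum_add_distrib]
  rw [sum_comm (f := fun x y => if y + 1 = x then 1 else 0)]
  have hfilter : {x ∈ range m | x + 1 < m} = range (m - 1) := by ext; simp; omega
  simp [sum_ite_eq, hfilter]
  omega

theorem sum_fin_dist_eq_one (m : ℕ) :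
    ∑ x : Fin m, ∑ y : Fin m, (if Nat.dist x y = 1 then 1 else 0) = 2 * (m - 1) := by
  rw [← sum_range_dist_eq_one]
  simp only [← Fin.sum_univ_eq_sum_range]

theorem sum_adjacent_firstLetters (ha : 1 ≤ a) (b : Bool) :
    ∑ x : Fin (a + 1), ∑ y : Fin (a + 1),
      (if Nat.dist x y = 1 ∧ ((x : ℕ) = a → b) ∧ ((y : ℕ) = a → b) then 1 else 0) =
      2 * (a - 1) + if b then 2 else 0 := by
  cases b
  · simp only [Fin.sum_univ_castSucc (n := a), Fin.val_castSucc, Fin.val_last]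
    simpa [fun x : Fin a => x.isLt.ne] using sum_fin_dist_eq_one a
  · simpa [show a + 1 - 1 = a - 1 + 1 by omega, mul_add] using sum_fin_dist_eq_one (a + 1)

def vertexCount (a : ℕ) (b : Bool) (n : ℕ) : ℕ :=
  Fintype.card {α : Word a n // Admissible a b α}

def dartCount (a : ℕ) (b : Bool) (n : ℕ) : ℕ :=
  Fintype.card {p : Word a n × Word a n //
    Admissible a b p.1 ∧ Admissible a b p.2 ∧ ∑ i, Nat.dist (p.1 i) (p.2 i) = 1}

theorem vertexCount_eq_sum (b : Bool) :
    vertexCount a b n = ∑ α : Word a n, if Admissible a b α then 1 else 0 := by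
  rw [vertexCount, Fintype.card_subtype, card_filter]

theorem dartCount_eq_sum (b : Bool) :
    dartCount a b n = ∑ u : Word a n, ∑ v : Word a n,
      if Admissible a b u ∧ Admissible a b v ∧ ∑ i, Nat.dist (u i) (v i) = 1 then 1 else 0 := by
  rw [dartCount, Fintype.card_subtype, card_filter, Fintype.sum_prod_type]

theorem vertexCount_zero (b : Bool) : vertexCount a b 0 = 1 := by
  simp [vertexCount_eq_sum, Admissible]

theorem dartCount_zero (b : Bool) : dartCount a b 0 = 0 := by
  simp [dartCount]

theorem vertexCount_succ_eq_sum (b : Bool) :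
    vertexCount a b (n + 1) =
      ∑ x : Fin (a + 1), if (x : ℕ) = a → b then vertexCount a ((x : ℕ) = 0) n else 0 := by
  simp only [vertexCount_eq_sum, sum_word_succ, admissible_cons, ite_and, sum_ite_irrel,
    sum_const_zero]

theorem sum_sum_dart_cons (b : Bool) (x y : Fin (a + 1)) :
    ∑ β : Word a n, ∑ γ : Word a n,
      (if Admissible a b (Fin.cons x β : Word a (n + 1)) ∧
          Admissible a b (Fin.cons y γ : Word a (n + 1)) ∧
          ∑ i, Nat.dist ((Fin.cons x β : Word a (n + 1)) i)
            ((Fin.cons y γ : Word a (n + 1)) i) = 1 then 1 else 0) =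
      (if x = y then if (x : ℕ) = a → b then dartCount a ((x : ℕ) = 0) n else 0 else 0) +
      if Nat.dist x y = 1 ∧ ((x : ℕ) = a → b) ∧ ((y : ℕ) = a → b) then vertexCount a false n
      else 0 := by
  simp only [admissible_cons, sum_dist_cons]
  obtain h | h | h : Nat.dist x y = 0 ∨ Nat.dist x y = 1 ∨ 2 ≤ Nat.dist x y := by omega
  · obtain rfl : x = y := Fin.ext (Nat.eq_of_dist_eq_zero h)
    by_cases hx : (x : ℕ) = a → b
    · simp only [h, eq_true hx, dartCount_eq_sum]
      simp
    · simp [hx]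
  · have hxy : x ≠ y := fun e => by simp [e, Nat.dist_self] at h
    have hβ (β : Word a n) :
        Admissible a ((x : ℕ) = 0) β ∧ Admissible a ((y : ℕ) = 0) β ↔ Admissible a false β := by
      apply admissible_and_admissible
      by_contra! h0
      simp only [ne_eq, Bool.not_eq_false, decide_eq_true_eq] at h0
      exact hxy (Fin.ext (h0.1.trans h0.2.symm))
    simp only [h, hxy, if_false, zero_add, add_eq_left, sum_dist_eq_zero_iff, true_and]
    rw [vertexCount_eq_sum, ite_sum_zero]
    refine sum_congr rfl fun β _ => ?_
    rw [Fintype.sum_eq_single β fun γ hγ => if_neg fun h => hγ h.2.2.symm]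
    have := hβ β
    split_ifs <;> tauto
  · have hxy : x ≠ y := fun e => by simp [e, Nat.dist_self] at h
    simp [hxy, show Nat.dist x y ≠ 1 by omega]
    intros; omega

theorem dartCount_succ_eq_sum (b : Bool) :
    dartCount a b (n + 1) =
      (∑ x : Fin (a + 1), if (x : ℕ) = a → b then dartCount a ((x : ℕ) = 0) n else 0) +
      (∑ x : Fin (a + 1), ∑ y : Fin (a + 1),
        if Nat.dist x y = 1 ∧ ((x : ℕ) = a → b) ∧ ((y : ℕ) = a → b) then 1 else 0) *
        vertexCount a false n := by
  rw [dartCount_eq_sum, sum_word_succ]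
  simp_rw [sum_word_succ (f := fun v => if _ ∧ Admissible a b v ∧ _ then 1 else 0)]
  rw [sum_congr rfl fun x _ => sum_comm]
  simp only [sum_sum_dart_cons, sum_add_distrib, sum_ite_eq, mem_univ, if_true, sum_mul,
    boole_mul]

theorem vertexCount_succ (ha : 1 ≤ a) (b : Bool) :
    vertexCount a b (n + 1) =
      vertexCount a true n + (a - 1) * vertexCount a false n +
        if b then vertexCount a false n else 0 := by
  rw [vertexCount_succ_eq_sum, sum_firstLetter ha b (vertexCount a · n), smul_eq_mul]

theorem dartCount_succ (ha : 1 ≤ a) (b : Bool) :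
    dartCount a b (n + 1) =
      dartCount a true n + (a - 1) * dartCount a false n +
        (if b then dartCount a false n else 0) +
        (2 * (a - 1) + if b then 2 else 0) * vertexCount a false n := by
  rw [dartCount_succ_eq_sum, sum_firstLetter ha b (dartCount a · n),
    sum_adjacent_firstLetters ha, smul_eq_mul]

theorem vertexCount_false_one (ha : 1 ≤ a) : vertexCount a false 1 = a := by
  simp [vertexCount_succ ha, vertexCount_zero]
  omega

theorem metallicDiff_vertexCount (ha : 1 ≤ a) (n : ℕ) :
    metallicDiff (a : ℤ) (fun n => (vertexCount a false n : ℤ)) n = 0 := by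
  have h₁ := vertexCount_succ ha false (n := n + 1)
  have h₂ := vertexCount_succ ha true (n := n)
  have h₃ := vertexCount_succ ha false (n := n)
  simp only [if_true, if_false, Bool.false_eq_true, add_zero] at h₁ h₂ h₃
  zify [ha] at h₁ h₂ h₃
  rw [metallicDiff]
  linear_combination h₁ + h₂ - h₃

theorem two_mul_card_edgeFinset :
    2 * #(metallicCube a n).edgeFinset = dartCount a false n := by
  rw [← SimpleGraph.dart_card_eq_twice_card_edges, dartCount]
  exact Fintype.card_congr
    { toFun d := ⟨(d.fst.1, d.snd.1), (metallicOK_iff_admissible _).1 d.fst.2,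
        (metallicOK_iff_admissible _).1 d.snd.2, d.adj⟩
      invFun p := ⟨(⟨p.1.1, (metallicOK_iff_admissible _).2 p.2.1⟩,
        ⟨p.1.2, (metallicOK_iff_admissible _).2 p.2.2.1⟩), p.2.2.2⟩
      left_inv _ := rfl
      right_inv _ := rfl }

theorem card_edgeFinset_zero : #(metallicCube a 0).edgeFinset = 0 := by
  have h := two_mul_card_edgeFinset (a := a) (n := 0)
  rw [dartCount_zero] at h
  omega

theorem card_edgeFinset_one (ha : 1 ≤ a) : #(metallicCube a 1).edgeFinset = a - 1 := by
  have h := two_mul_card_edgeFinset (a := a) (n := 1)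
  simp [dartCount_succ ha, dartCount_zero, vertexCount_zero] at h
  omega

theorem metallicDiff_card_edgeFinset (ha : 1 ≤ a) (n : ℕ) :
    metallicDiff (a : ℤ) (fun n => (#(metallicCube a n).edgeFinset : ℤ)) n =
      (a - 1) * vertexCount a false (n + 1) + vertexCount a false n := by
  have h₁ := dartCount_succ ha false (n := n + 1)
  have h₂ := dartCount_succ ha true (n := n)
  have h₃ := dartCount_succ ha false (n := n)
  simp only [if_true, if_false, Bool.false_eq_true, add_zero, ← two_mul_card_edgeFinset]
    at h₁ h₂ h₃
  zify [ha] at h₁ h₂ h₃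
  rw [metallicDiff]
  linarith

theorem sub_one_mul_vertexCount_succ_add_vertexCount (ha : 1 ≤ a) (n : ℕ) :
    ((a : ℤ) - 1) * vertexCount a false (n + 1) + vertexCount a false n =
      (diagPoly (fun m => (-1) ^ m) (n + 2)).eval (a : ℤ) := by
  have hV := metallicDiff_vertexCount ha
  have hw (n : ℕ) := congrArg (eval (a : ℤ)) (metallicDiff_diagPoly_negOnePow n)
  simp only [eval_metallicDiff, eval_zero] at hw
  have hV₁ := vertexCount_false_one ha
  have hV₂ := hV 0
  simp only [metallicDiff, vertexCount_zero, hV₁, zero_add] at hV₂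
  refine congrFun (eq_of_metallicDiff_eq (c := (a : ℤ))
    (s := fun n => ((a : ℤ) - 1) * vertexCount a false (n + 1) + vertexCount a false n)
    (t := fun n => (diagPoly (fun m => (-1) ^ m) (n + 2)).eval (a : ℤ)) ?_ ?_ ?_) n
  · funext n
    have h₁ := hV (n + 1)
    have h₂ := hV n
    have h₃ := hw (n + 2)
    simp only [metallicDiff] at h₁ h₂ h₃ ⊢
    linear_combination (↑a - 1) * h₁ + h₂ - h₃
  · simp [eval_diagPoly, vertexCount_zero, hV₁, sum_range_succ]
    ring
  · simp [eval_diagPoly, hV₁, sum_range_succ]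
    linear_combination (↑a - 1) * hV₂

end Metallic

open Metallic

theorem metallic_edge_formula_general (a n : ℕ) (ha : 1 ≤ a) :
    ((metallicCube a n).edgeFinset.card : ℤ) =
      ∑ k ∈ Finset.range (n + 1),
        (-1 : ℤ) ^ (n + k) * (((n + k + 1) / 2 : ℕ) : ℤ) *
          (Nat.choose ((n + k) / 2) k : ℤ) * (a : ℤ) ^ k := by
  have hL : metallicDiff (a : ℤ) (fun n => (#(metallicCube a n).edgeFinset : ℤ)) =
      metallicDiff (a : ℤ) (fun n => (diagPoly edgeWeight n).eval (a : ℤ)) := by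
    funext n
    rw [metallicDiff_card_edgeFinset ha, sub_one_mul_vertexCount_succ_add_vertexCount ha,
      ← eval_metallicDiff, metallicDiff_diagPoly_edgeWeight]
  have h0 : (#(metallicCube a 0).edgeFinset : ℤ) = (diagPoly edgeWeight 0).eval (a : ℤ) := by
    simp [card_edgeFinset_zero, eval_diagPoly, edgeWeight]
  have h1 : (#(metallicCube a 1).edgeFinset : ℤ) = (diagPoly edgeWeight 1).eval (a : ℤ) := by
    simp [card_edgeFinset_one ha, eval_diagPoly, edgeWeight, ha, sum_range_succ]
    ring
  simpa [eval_diagPoly, edgeWeight] using congrFun (eq_of_metallicDiff_eq hL h0 h1) n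

/-- the number of edges of `Π^a_n` equals
`Σ_{k=0}^{n} (−1)^{n+k} · ⌈(n+k)/2⌉ · C(⌊(n+k)/2⌋, k) · a^k`. -/
theorem metallic_edge_formula (a n : ℕ) (ha : 1 ≤ a) (hn : 1 ≤ n) :
    ((metallicCube a n).edgeFinset.card : ℤ) =
      ∑ k ∈ Finset.range (n + 1),
        (-1 : ℤ) ^ (n + k) * (((n + k + 1) / 2 : ℕ) : ℤ) *
          (Nat.choose ((n + k) / 2) k : ℤ) * (a : ℤ) ^ k :=
  metallic_edge_formula_general a n ha
end

section
/- For every integer n ≥ 0, Σ_{k=0}^{n} (−1)^{n+k} · ⌈(n+k)/2⌉ · C(⌊(n+k)/2⌋, k) = Σ_{k=0}^{n} F_k · F_{n−k}, where F denotes the Fibonacci numbers. -/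
open Finset

private def T (n : ℕ) : ℕ := ∑ i ∈ range (n+1), (n+1-i) * Nat.choose (n-i) i
private def R (n : ℕ) : ℕ := ∑ k ∈ range (n+1), Nat.fib k * Nat.fib (n-k)
private lemma diag (m : ℕ) : ∑ i ∈ range (m+1), Nat.choose (m-i) i = Nat.fib (m+1) := by
  rw [Nat.fib_succ_eq_sum_choose, Finset.Nat.sum_antidiagonal_eq_sum_range_succ_mk,
    ← Finset.sum_range_reflect]
  exact Finset.sum_congr rfl fun i hi => by
    simp only [Finset.mem_range] at hi; congr 1 <;> omega

private lemma diag' (m N : ℕ) (h : m+1 ≤ N) :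
    ∑ i ∈ range N, Nat.choose (m-i) i = Nat.fib (m+1) := by
  rw [← diag m]
  symm
  apply Finset.sum_subset (Finset.range_subset_range.2 h)
  intro i _ hi
  simp only [Finset.mem_range, not_lt] at hi
  rw [show m - i = 0 by omega, Nat.choose_eq_zero_of_lt (by omega)]

private lemma Trec (n : ℕ) : T (n+2) + (n+3) = T (n+1) + T n + Nat.fib (n+3) + (n+3) := by
  have e1 : T (n+2) = (n+3) + ∑ j ∈ range (n+2), (n+2-j) * Nat.choose (n-j) (j+1)
      + ∑ j ∈ range (n+2), (n+2-j) * Nat.choose (n-j) j := by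
    rw [T, Finset.sum_range_succ' _ (n+2)]
    simp only [Nat.sub_zero, Nat.choose_zero_right, mul_one, Nat.add_sub_cancel]
    have : ∀ j ∈ range (n+2), (n+2+1-(j+1)) * Nat.choose (n+2-(j+1)) (j+1)
        = (n+2-j) * Nat.choose (n-j) (j+1) + (n+2-j) * Nat.choose (n-j) j := by
      intro j hj
      simp only [Finset.mem_range] at hj
      rcases Nat.lt_or_ge j (n+1) with h | h
      · rw [show n+2-(j+1) = (n-j)+1 by omega, show n+2+1-(j+1) = n+2-j by omega,
          Nat.choose_succ_succ', ← Nat.mul_add]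
        ring
      · rw [show n+2-(j+1) = 0 by omega, show n-j = 0 by omega,
          Nat.choose_eq_zero_of_lt (show 0 < j+1 by omega),
          Nat.choose_eq_zero_of_lt (show 0 < j by omega)]
        ring
    rw [Finset.sum_congr rfl this, Finset.sum_add_distrib]
    ring
  have e0 : ∑ j ∈ range (n+2), (n+2-j) * Nat.choose (n-j) j = T n + Nat.fib (n+1) := by
    have : ∀ j ∈ range (n+2), (n+2-j) * Nat.choose (n-j) j
        = (n+1-j) * Nat.choose (n-j) j + Nat.choose (n-j) j := by
      intro j hj
      simp only [Finset.mem_range] at hj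
      rw [show n+2-j = (n+1-j)+1 by omega]
      ring
    rw [Finset.sum_congr rfl this, Finset.sum_add_distrib, diag' n (n+2) (by omega)]
    congr 1
    rw [Finset.sum_range_succ]
    simp [T]
  have h1 : ∑ j ∈ range (n+2), (n+1-j) * Nat.choose (n-j) (j+1) + (n+2) = T (n+1) := by
    symm
    rw [T, Finset.sum_range_succ' _ (n+1), Finset.sum_range_succ _ (n+1)]
    simp only [Nat.sub_zero, Nat.choose_zero_right, mul_one, Nat.sub_self, Nat.zero_mul,
      Nat.add_zero, Nat.add_sub_cancel]
    congr 1
    apply Finset.sum_congr rfl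
    intro j hj
    simp only [Finset.mem_range] at hj
    rw [show n+1+1-(j+1) = n+1-j by omega, show n+1-(j+1) = n-j by omega]
  have h2 : ∑ j ∈ range (n+2), Nat.choose (n-j) (j+1) + 1 = Nat.fib (n+2) := by
    rw [← diag' (n+1) (n+3) (by omega), Finset.sum_range_succ' _ (n+2)]
    simp only [Nat.sub_zero, Nat.choose_zero_right]
    congr 1
    apply Finset.sum_congr rfl
    intro j hj
    simp only [Finset.mem_range] at hj
    rw [show n+1-(j+1) = n-j by omega]
  have e2 : ∑ j ∈ range (n+2), (n+2-j) * Nat.choose (n-j) (j+1) + (n+2) + 1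
      = T (n+1) + Nat.fib (n+2) := by
    have hc : ∀ j ∈ range (n+2), (n+2-j) * Nat.choose (n-j) (j+1)
        = (n+1-j) * Nat.choose (n-j) (j+1) + Nat.choose (n-j) (j+1) := by
      intro j hj
      simp only [Finset.mem_range] at hj
      rw [show n+2-j = (n+1-j)+1 by omega]
      ring
    rw [Finset.sum_congr rfl hc, Finset.sum_add_distrib]
    omega
  have hf : Nat.fib (n+3) = Nat.fib (n+2) + Nat.fib (n+1) := by
    rw [show n+3 = (n+1)+2 from rfl, Nat.fib_add_two, show n+1+1 = n+2 from rfl,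
      Nat.add_comm]
  omega

private lemma Rrec (n : ℕ) : R (n+2) = R (n+1) + R n + Nat.fib (n+1) := by
  have key : ∀ k ∈ range (n+1), Nat.fib k * Nat.fib (n+2-k)
      = Nat.fib k * Nat.fib (n+1-k) + Nat.fib k * Nat.fib (n-k) := by
    intro k hk
    simp only [Finset.mem_range] at hk
    rw [show n+2-k = (n-k)+2 by omega, Nat.fib_add_two, show (n-k)+1 = n+1-k by omega,
      Nat.mul_add, Nat.add_comm (Nat.fib k * Nat.fib (n-k))]
  have hR1 : R (n+1) = ∑ k ∈ range (n+1), Nat.fib k * Nat.fib (n+1-k) := by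
    rw [R, Finset.sum_range_succ, Nat.sub_self, Nat.fib_zero, Nat.mul_zero, Nat.add_zero]
  have hRn : R n = ∑ k ∈ range (n+1), Nat.fib k * Nat.fib (n-k) := rfl
  rw [R, Finset.sum_range_succ, Finset.sum_range_succ, Finset.sum_congr rfl key,
    Finset.sum_add_distrib, ← hR1, ← hRn, Nat.sub_self, Nat.fib_zero, Nat.mul_zero,
    Nat.add_zero, show n+2-(n+1) = 1 by omega, Nat.fib_one, Nat.mul_one]

private lemma TR : ∀ n, T n = R (n+2) ∧ T (n+1) = R (n+3) := by
  intro n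
  induction n with
  | zero => constructor <;> decide
  | succ m ih =>
    obtain ⟨h0, h1⟩ := ih
    refine ⟨h1, ?_⟩
    have ht := Trec m
    have hr := Rrec (m+2)
    have hf : Nat.fib (m+2+1) = Nat.fib (m+3) := rfl
    have e1 : R (m+2+2) = R (m+1+3) := rfl
    have e2 : R (m+2+1) = R (m+3) := rfl
    have e3 : T (m+1+1) = T (m+2) := rfl
    omega

private lemma pair_sum (f : ℕ → ℤ) (m : ℕ) :
    ∑ j ∈ range (2*m), f j = ∑ i ∈ range m, (f (2*i) + f (2*i+1)) := by
  induction m with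
  | zero => simp
  | succ k ih =>
    rw [show 2*(k+1) = (2*k+1)+1 by ring, Finset.sum_range_succ, Finset.sum_range_succ,
      Finset.sum_range_succ, ih]
    ring

private lemma even_int (m : ℕ) :
    ∑ k ∈ Finset.range (2*m + 1),
        (-1 : ℤ) ^ (2*m + k) * (((2*m + k + 1) / 2 : ℕ) : ℤ) *
          (Nat.choose ((2*m + k) / 2) k : ℤ)
    = (m : ℤ) + ∑ i ∈ range m, (((2*m-i) * Nat.choose (2*m-i) i : ℕ) : ℤ)
        - ∑ i ∈ range m, (((2*m-i) * Nat.choose (2*m-1-i) i : ℕ) : ℤ) := by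
  rw [← Finset.sum_range_reflect, Finset.sum_range_succ, pair_sum]
  have key : ∀ i ∈ range m,
      ((-1 : ℤ) ^ (2*m + (2*m + 1 - 1 - 2*i)) * ↑((2*m + (2*m + 1 - 1 - 2*i) + 1) / 2) *
          ↑(Nat.choose ((2*m + (2*m + 1 - 1 - 2*i)) / 2) (2*m + 1 - 1 - 2*i)) +
        (-1 : ℤ) ^ (2*m + (2*m + 1 - 1 - (2*i+1))) * ↑((2*m + (2*m + 1 - 1 - (2*i+1)) + 1) / 2) *
          ↑(Nat.choose ((2*m + (2*m + 1 - 1 - (2*i+1))) / 2) (2*m + 1 - 1 - (2*i+1))))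
      = (((2*m-i) * Nat.choose (2*m-i) i : ℕ) : ℤ)
        - (((2*m-i) * Nat.choose (2*m-1-i) i : ℕ) : ℤ) := by
    intro i hi
    simp only [Finset.mem_range] at hi
    rw [show 2*m + 1 - 1 - 2*i = 2*m-i-i by omega,
        show 2*m + 1 - 1 - (2*i+1) = 2*m-1-i-i by omega,
        show 2*m + (2*m-i-i) = 2*(2*m-i) by omega,
        show 2*m + (2*m-1-i-i) = 2*(2*m-1-i)+1 by omega,
        show (2*(2*m-i)+1)/2 = 2*m-i by omega,
        show (2*(2*m-1-i)+1+1)/2 = 2*m-i by omega,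
        show 2*(2*m-i)/2 = 2*m-i by omega,
        show (2*(2*m-1-i)+1)/2 = 2*m-1-i by omega,
        Nat.choose_symm (show i ≤ 2*m-i by omega),
        Nat.choose_symm (show i ≤ 2*m-1-i by omega)]
    simp [pow_mul, pow_succ]
    push_cast
    ring
  rw [Finset.sum_congr rfl key, Finset.sum_sub_distrib,
    show 2*m + 1 - 1 - 2*m = 0 by omega,
    show (2*m + 0 + 1)/2 = m by omega,
    show (2*m + 0)/2 = m by omega,
    show 2*m + 0 = 2*m by omega,
    Nat.choose_zero_right, pow_mul]
  norm_num
  ring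

private lemma odd_int (m : ℕ) :
    ∑ k ∈ Finset.range (2*m+1 + 1),
        (-1 : ℤ) ^ (2*m+1 + k) * (((2*m+1 + k + 1) / 2 : ℕ) : ℤ) *
          (Nat.choose ((2*m+1 + k) / 2) k : ℤ)
    = ∑ i ∈ range (m+1), (((2*m+1-i) * Nat.choose (2*m+1-i) i : ℕ) : ℤ)
        - ∑ i ∈ range (m+1), (((2*m+1-i) * Nat.choose (2*m-i) i : ℕ) : ℤ) := by
  rw [← Finset.sum_range_reflect, show 2*m+1+1 = 2*(m+1) by ring, pair_sum]
  have key : ∀ i ∈ range (m+1),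
      ((-1 : ℤ) ^ (2*m+1 + (2*(m+1) - 1 - 2*i)) * ↑((2*m+1 + (2*(m+1) - 1 - 2*i) + 1) / 2) *
          ↑(Nat.choose ((2*m+1 + (2*(m+1) - 1 - 2*i)) / 2) (2*(m+1) - 1 - 2*i)) +
        (-1 : ℤ) ^ (2*m+1 + (2*(m+1) - 1 - (2*i+1))) *
          ↑((2*m+1 + (2*(m+1) - 1 - (2*i+1)) + 1) / 2) *
          ↑(Nat.choose ((2*m+1 + (2*(m+1) - 1 - (2*i+1))) / 2) (2*(m+1) - 1 - (2*i+1))))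
      = (((2*m+1-i) * Nat.choose (2*m+1-i) i : ℕ) : ℤ)
        - (((2*m+1-i) * Nat.choose (2*m-i) i : ℕ) : ℤ) := by
    intro i hi
    simp only [Finset.mem_range] at hi
    rw [show 2*(m+1) - 1 - 2*i = 2*m+1-i-i by omega,
        show 2*(m+1) - 1 - (2*i+1) = 2*m-i-i by omega,
        show 2*m+1 + (2*m+1-i-i) = 2*(2*m+1-i) by omega,
        show 2*m+1 + (2*m-i-i) = 2*(2*m-i)+1 by omega,
        show (2*(2*m+1-i)+1)/2 = 2*m+1-i by omega,
        show (2*(2*m-i)+1+1)/2 = 2*m+1-i by omega,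
        show 2*(2*m+1-i)/2 = 2*m+1-i by omega,
        show (2*(2*m-i)+1)/2 = 2*m-i by omega,
        Nat.choose_symm (show i ≤ 2*m+1-i by omega),
        Nat.choose_symm (show i ≤ 2*m-i by omega)]
    simp [pow_mul, pow_succ]
    push_cast
    ring
  rw [Finset.sum_congr rfl key, Finset.sum_sub_distrib]
private lemma trunc (M N : ℕ) (h : M ≤ N) (g : ℕ → ℕ)
    (hz : ∀ t, M ≤ t → Nat.choose (g t) t = 0) (c : ℕ → ℕ) :
    ∑ t ∈ range N, c t * Nat.choose (g t) t = ∑ t ∈ range M, c t * Nat.choose (g t) t := by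
  symm
  apply Finset.sum_subset (Finset.range_subset_range.2 h)
  intro t _ ht
  simp only [Finset.mem_range, not_lt] at ht
  rw [hz t ht, Nat.mul_zero]

private lemma even_nat (m : ℕ) :
    (m+1) + ∑ i ∈ range (m+1), (2*(m+1)-i) * Nat.choose (2*(m+1)-i) i
    = ∑ i ∈ range (m+1), (2*(m+1)-i) * Nat.choose (2*(m+1)-1-i) i + T (2*m) := by
  have hA : ∑ i ∈ range (m+1), (2*(m+1)-i) * Nat.choose (2*(m+1)-i) i
      = ∑ t ∈ range m, (2*(m+1)-(t+1)) * Nat.choose (2*(m+1)-(t+1)) (t+1) + 2*(m+1) := by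
    rw [Finset.sum_range_succ' _ m]
    simp
  have hB : ∑ i ∈ range (m+1), (2*(m+1)-i) * Nat.choose (2*(m+1)-1-i) i
      = ∑ t ∈ range m, (2*(m+1)-(t+1)) * Nat.choose (2*(m+1)-1-(t+1)) (t+1) + 2*(m+1) := by
    rw [Finset.sum_range_succ' _ m]
    simp
  have hP : ∀ t ∈ range m, (2*(m+1)-(t+1)) * Nat.choose (2*(m+1)-(t+1)) (t+1)
      = (2*(m+1)-(t+1)) * Nat.choose (2*(m+1)-1-(t+1)) (t+1)
        + (2*m+1-t) * Nat.choose (2*m-t) t := by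
    intro t ht
    simp only [Finset.mem_range] at ht
    rw [show 2*(m+1)-(t+1) = (2*m-t)+1 by omega, Nat.choose_succ_succ',
      show 2*(m+1)-1-(t+1) = 2*m-t by omega, Nat.mul_add, show (2*m-t)+1 = 2*m+1-t by omega]
    ring
  have hT : T (2*m) = ∑ t ∈ range m, (2*m+1-t) * Nat.choose (2*m-t) t + (m+1) := by
    rw [T, trunc (m+1) (2*m+1) (by omega) _ (fun t ht => Nat.choose_eq_zero_of_lt (by omega)),
      Finset.sum_range_succ, show 2*m+1-m = m+1 by omega, show 2*m-m = m by omega,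
      Nat.choose_self, Nat.mul_one]
  rw [hA, hB, Finset.sum_congr rfl hP, Finset.sum_add_distrib, hT]
  omega

private lemma odd_nat (m : ℕ) :
    ∑ i ∈ range (m+2), (2*(m+1)+1-i) * Nat.choose (2*(m+1)+1-i) i
    = ∑ i ∈ range (m+2), (2*(m+1)+1-i) * Nat.choose (2*(m+1)-i) i + T (2*m+1) := by
  have hA : ∑ i ∈ range (m+2), (2*(m+1)+1-i) * Nat.choose (2*(m+1)+1-i) i
      = ∑ t ∈ range (m+1), (2*(m+1)+1-(t+1)) * Nat.choose (2*(m+1)+1-(t+1)) (t+1)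
        + (2*(m+1)+1) := by
    rw [Finset.sum_range_succ' _ (m+1)]
    simp
  have hB : ∑ i ∈ range (m+2), (2*(m+1)+1-i) * Nat.choose (2*(m+1)-i) i
      = ∑ t ∈ range (m+1), (2*(m+1)+1-(t+1)) * Nat.choose (2*(m+1)-(t+1)) (t+1)
        + (2*(m+1)+1) := by
    rw [Finset.sum_range_succ' _ (m+1)]
    simp
  have hP : ∀ t ∈ range (m+1), (2*(m+1)+1-(t+1)) * Nat.choose (2*(m+1)+1-(t+1)) (t+1)
      = (2*(m+1)+1-(t+1)) * Nat.choose (2*(m+1)-(t+1)) (t+1)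
        + (2*(m+1)-t) * Nat.choose (2*(m+1)-1-t) t := by
    intro t ht
    simp only [Finset.mem_range] at ht
    rw [show 2*(m+1)+1-(t+1) = (2*(m+1)-1-t)+1 by omega, Nat.choose_succ_succ',
      show 2*(m+1)-(t+1) = 2*(m+1)-1-t by omega, Nat.mul_add,
      show (2*(m+1)-1-t)+1 = 2*(m+1)-t by omega]
    ring
  have hT : T (2*m+1) = ∑ t ∈ range (m+1), (2*(m+1)-t) * Nat.choose (2*(m+1)-1-t) t := by
    rw [T, trunc (m+1) (2*m+1+1) (by omega) _
      (fun t ht => Nat.choose_eq_zero_of_lt (by omega))]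
    apply Finset.sum_congr rfl
    intro t ht
    simp only [Finset.mem_range] at ht
    rw [show 2*m+1+1-t = 2*(m+1)-t by omega, show 2*m+1-t = 2*(m+1)-1-t by omega]
  rw [hA, hB, Finset.sum_congr rfl hP, Finset.sum_add_distrib, hT]
  omega

private lemma cast_R (n : ℕ) :
    ∑ k ∈ Finset.range (n + 1), (Nat.fib k : ℤ) * (Nat.fib (n - k) : ℤ) = (R n : ℤ) := by
  rw [R]
  push_cast
  rfl

/-- `Σ_{k=0}^{n} (−1)^{n+k} · ⌈(n+k)/2⌉ · C(⌊(n+k)/2⌋, k) = Σ_{k=0}^{n} F_k · F_{n−k}`. -/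
theorem alternating_sum_eq_fib_convolution (n : ℕ) :
    ∑ k ∈ Finset.range (n + 1),
        (-1 : ℤ) ^ (n + k) * (((n + k + 1) / 2 : ℕ) : ℤ) *
          (Nat.choose ((n + k) / 2) k : ℤ) =
      ∑ k ∈ Finset.range (n + 1), (Nat.fib k : ℤ) * (Nat.fib (n - k) : ℤ) := by
  obtain ⟨m, rfl | rfl⟩ := Nat.even_or_odd' n
  · rcases m with _ | m'
    · norm_num
    · rw [even_int (m'+1), cast_R, ← Nat.cast_sum, ← Nat.cast_sum]
      have hn := even_nat m'
      have ht : T (2*m') = R (2*m'+2) := (TR (2*m')).1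
      have e : R (2*m'+2) = R (2*(m'+1)) := by rw [show 2*(m'+1) = 2*m'+2 by ring]
      omega
  · rcases m with _ | m'
    · norm_num [Finset.sum_range_succ]
    · rw [odd_int (m'+1), cast_R, ← Nat.cast_sum, ← Nat.cast_sum,
        show m'+1+1 = m'+2 by omega]
      have hn := odd_nat m'
      have ht : T (2*m'+1) = R (2*m'+1+2) := (TR (2*m'+1)).1
      have e : R (2*m'+1+2) = R (2*(m'+1)+1) := by rw [show 2*(m'+1)+1 = 2*m'+1+2 by ring]
      omega
end

section
/- Let a ≥ 3 and n ≥ 1. The maximum degree of the metallic cube Π^a_n is 2n, and the number of vertices of Π^a_n of degree 2n equals (a−2)^n; these are exactly the strings all of whose letters lie strictly between 0 and a−1. -/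
open Finset

section NatLattice

variable {ι : Type*} [DecidableEq ι]

theorem Finset.exists_eq_one_and_eq_zero_of_sum_eq_one {s : Finset ι} {f : ι → ℕ}
    (h : ∑ i ∈ s, f i = 1) : ∃ i ∈ s, f i = 1 ∧ ∀ j ∈ s, j ≠ i → f j = 0 := by
  obtain ⟨i, hi, hfi⟩ := exists_ne_zero_of_sum_ne_zero (h ▸ one_ne_zero)
  have hsplit := add_sum_erase s f hi
  refine ⟨i, hi, by omega, fun j hj hji => ?_⟩
  exact sum_eq_zero_iff.mp (by omega) j (mem_erase.mpr ⟨hji, hj⟩)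

/-- The step down from a coordinate `0` truncates to the identity. -/
def latticeStep (f : ι → ℕ) (p : ι × Bool) : ι → ℕ :=
  Function.update f p.1 (if p.2 then f p.1 + 1 else f p.1 - 1)

@[simp] theorem latticeStep_apply_self (f : ι → ℕ) (i : ι) (b : Bool) :
    latticeStep f (i, b) i = if b then f i + 1 else f i - 1 := by
  simp [latticeStep]

@[simp] theorem latticeStep_apply_of_ne (f : ι → ℕ) {i j : ι} (b : Bool) (h : j ≠ i) :
    latticeStep f (i, b) j = f j := by
  simp [latticeStep, h]

theorem exists_latticeStep_eq_of_sum_dist_eq_one [Fintype ι] {f g : ι → ℕ}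
    (h : ∑ i, Nat.dist (f i) (g i) = 1) : ∃ p, g = latticeStep f p := by
  obtain ⟨i, -, hi, hrest⟩ := exists_eq_one_and_eq_zero_of_sum_eq_one h
  have hdir : g i = f i + 1 ∨ g i = f i - 1 := by unfold Nat.dist at hi; omega
  refine hdir.elim (fun hg => ⟨(i, true), ?_⟩) (fun hg => ⟨(i, false), ?_⟩) <;>
  · funext j
    rcases eq_or_ne j i with rfl | hji
    · simpa using hg
    · simpa [hji] using (Nat.eq_of_dist_eq_zero (hrest j (mem_univ j) hji)).symm

theorem sum_dist_latticeStep [Fintype ι] {f : ι → ℕ} {i : ι} {b : Bool}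
    (hb : b = false → 0 < f i) : ∑ j, Nat.dist (f j) (latticeStep f (i, b) j) = 1 := by
  rw [sum_eq_single i (fun j _ hj => by simp [hj]) (by simp), latticeStep_apply_self]
  cases b
  · have := hb rfl
    simp only [Bool.false_eq_true, if_false, Nat.dist]
    omega
  · simp [Nat.dist]

theorem latticeStep_injective {f : ι → ℕ} (hf : ∀ i, 0 < f i) :
    Function.Injective (latticeStep f) := by
  rintro ⟨i, b⟩ ⟨j, c⟩ h
  have hi := congrFun h i
  have := hf i
  rcases eq_or_ne i j with rfl | hij
  · simp only [latticeStep_apply_self] at hi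
    grind
  · rw [latticeStep_apply_self, latticeStep_apply_of_ne _ _ hij] at hi
    grind

end NatLattice

namespace MetallicVertex

variable {a n : ℕ}

def toNat (v : MetallicVertex a n) (i : Fin n) : ℕ := v.1 i

theorem toNat_injective : Function.Injective (toNat (a := a) (n := n)) :=
  fun _ _ h => Subtype.ext <| funext fun i => Fin.ext (congrFun h i)

theorem toNat_lt (v : MetallicVertex a n) (i : Fin n) : v.toNat i < a + 1 := (v.1 i).isLt

def ofLt (f : Fin n → ℕ) (hf : ∀ i, f i < a) : MetallicVertex a n :=
  ⟨fun i => ⟨f i, by grind⟩, fun i hi => absurd hi (hf i).ne⟩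

@[simp] theorem toNat_ofLt (f : Fin n → ℕ) (hf : ∀ i, f i < a) : (ofLt f hf).toNat = f := rfl

def IsInterior (v : MetallicVertex a n) : Prop := ∀ i, 0 < v.toNat i ∧ v.toNat i < a - 1

instance : DecidablePred (IsInterior (a := a) (n := n)) := fun _ => by
  unfold IsInterior; infer_instance

theorem card_filter_isInterior : #{v : MetallicVertex a n | v.IsInterior} = (a - 2) ^ n := by
  symm
  rw [show (a - 2) ^ n = #(univ : Finset (Fin n → Fin (a - 2))) by simp]
  refine card_bij (fun g _ => ofLt (fun i => g i + 1) fun i => by grind) ?_ ?_ ?_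
  · intro g _
    simp only [mem_filter, mem_univ, true_and]
    intro i
    simp only [toNat_ofLt]
    grind
  · intro g _ g' _ h
    funext i
    have := congrFun (congrArg (·.toNat) h) i
    simp only [toNat_ofLt] at this
    exact Fin.ext (by omega)
  · intro v hv
    simp only [mem_filter, mem_univ, true_and] at hv
    refine ⟨fun i => ⟨v.toNat i - 1, by have := hv i; omega⟩, mem_univ _, toNat_injective ?_⟩
    funext i
    have := hv i
    simp only [toNat_ofLt]
    omega

end MetallicVertex

namespace metallicCube

open MetallicVertex

variable {a n : ℕ}

theorem adj_iff {u v : MetallicVertex a n} :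
    (metallicCube a n).Adj u v ↔ ∑ i, Nat.dist (u.toNat i) (v.toNat i) = 1 := Iff.rfl

theorem degree_le_card_of_forall_adj (v : MetallicVertex a n) (T : Finset (Fin n × Bool))
    (hT : ∀ w, (metallicCube a n).Adj v w → ∃ p ∈ T, w.toNat = latticeStep v.toNat p) :
    (metallicCube a n).degree v ≤ #T := by
  rw [← SimpleGraph.card_neighborFinset_eq_degree,
    ← card_image_of_injective _ toNat_injective]
  refine (card_le_card (t := T.image (latticeStep v.toNat)) fun f hf => ?_).trans card_image_le
  obtain ⟨w, hw, rfl⟩ := mem_image.mp hf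
  obtain ⟨p, hp, hwp⟩ := hT w ((metallicCube a n).mem_neighborFinset v w |>.mp hw)
  exact mem_image.mpr ⟨p, hp, hwp.symm⟩

theorem degree_le (v : MetallicVertex a n) : (metallicCube a n).degree v ≤ 2 * n := by
  refine (degree_le_card_of_forall_adj v univ fun w hw => ?_).trans (by simp [mul_comm])
  obtain ⟨p, hp⟩ := exists_latticeStep_eq_of_sum_dist_eq_one (adj_iff.mp hw)
  exact ⟨p, mem_univ p, hp⟩

theorem two_mul_le_degree_of_isInterior {v : MetallicVertex a n} (hv : v.IsInterior) :
    2 * n ≤ (metallicCube a n).degree v := by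
  have hstep_lt : ∀ p i, latticeStep v.toNat p i < a := by
    rintro ⟨j, b⟩ i
    have := hv i
    rcases eq_or_ne i j with rfl | hi
    · rw [latticeStep_apply_self]; split <;> omega
    · rw [latticeStep_apply_of_ne _ _ hi]; omega
  let move (p : Fin n × Bool) : MetallicVertex a n := ofLt _ (hstep_lt p)
  have hmove_injective : Function.Injective move := fun p q h =>
    latticeStep_injective (fun i => (hv i).1) (congrArg (·.toNat) h)
  rw [← SimpleGraph.card_neighborFinset_eq_degree]
  calc 2 * n = #(univ.image move) := by
        rw [card_image_of_injective _ hmove_injective]; simp [mul_comm]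
    _ ≤ _ := card_le_card fun w hw => by
        obtain ⟨⟨i, b⟩, -, rfl⟩ := mem_image.mp hw
        exact (SimpleGraph.mem_neighborFinset _ _ _).mpr
          (adj_iff.mpr (sum_dist_latticeStep fun _ => (hv i).1))

theorem degree_lt_of_not_isInterior {v : MetallicVertex a n} (hv : ¬ v.IsInterior) :
    (metallicCube a n).degree v < 2 * n := by
  suffices ∃ x, ∀ w, (metallicCube a n).Adj v w → w.toNat ≠ latticeStep v.toNat x by
    obtain ⟨x, hx⟩ := this
    refine (degree_le_card_of_forall_adj v (univ.erase x) fun w hw => ?_).trans_lt ?_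
    · obtain ⟨p, hp⟩ := exists_latticeStep_eq_of_sum_dist_eq_one (adj_iff.mp hw)
      exact ⟨p, mem_erase.mpr ⟨fun hpx => hx w hw (hpx ▸ hp), mem_univ p⟩, hp⟩
    · have : 0 < n := Fin.pos x.1
      rw [card_erase_of_mem (mem_univ x)]; simp [mul_comm]; omega
  obtain ⟨i, hi⟩ := not_forall.mp hv
  by_cases hzero : ∃ j, v.toNat j = 0
  · obtain ⟨j, hj⟩ := hzero
    refine ⟨(j, false), fun w hw hwv => hw.ne (toNat_injective ?_).symm⟩
    simp [hwv, latticeStep, hj]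
  · push Not at hzero
    refine ⟨(i, true), fun w hw hwv => ?_⟩
    have hwi : w.toNat i = a := by
      have := congrFun hwv i
      have := w.toNat_lt i
      have := hzero i
      simp only [latticeStep_apply_self, if_true] at *
      omega
    obtain ⟨j, hji, hwj⟩ := w.2 i hwi
    have hne : j ≠ i := by rintro rfl; omega
    exact hzero j (by rw [← latticeStep_apply_of_ne v.toNat true hne, ← hwv]; exact hwj)

theorem degree_eq_two_mul_iff (v : MetallicVertex a n) :
    (metallicCube a n).degree v = 2 * n ↔ v.IsInterior :=
  ⟨fun h => by_contra fun hv => (degree_lt_of_not_isInterior hv).ne h,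
    fun hv => (degree_le v).antisymm (two_mul_le_degree_of_isInterior hv)⟩

end metallicCube

theorem metallic_max_degree_general (a n : ℕ) :
    (∀ v : MetallicVertex a n, (metallicCube a n).degree v ≤ 2 * n) ∧
    (∀ v : MetallicVertex a n,
      (metallicCube a n).degree v = 2 * n ↔
        ∀ i : Fin n, 0 < (v.1 i : ℕ) ∧ (v.1 i : ℕ) < a - 1) ∧
    (Finset.univ.filter fun v : MetallicVertex a n =>
      (metallicCube a n).degree v = 2 * n).card = (a - 2) ^ n := by
  refine ⟨metallicCube.degree_le, metallicCube.degree_eq_two_mul_iff, ?_⟩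
  rw [← MetallicVertex.card_filter_isInterior]
  exact congrArg card (filter_congr fun v _ => metallicCube.degree_eq_two_mul_iff v)

/-- for `a ≥ 3` and `n ≥ 1`, the maximum degree of `Π^a_n` is `2n`;
the vertices of degree `2n` are exactly the strings all of whose letters lie strictly
between `0` and `a−1`, and there are `(a−2)^n` of them. -/
theorem metallic_max_degree (a n : ℕ) (ha : 3 ≤ a) (hn : 1 ≤ n) :
    (∀ v : MetallicVertex a n, (metallicCube a n).degree v ≤ 2 * n) ∧
    (∀ v : MetallicVertex a n,
      (metallicCube a n).degree v = 2 * n ↔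
        ∀ i : Fin n, 0 < (v.1 i : ℕ) ∧ (v.1 i : ℕ) < a - 1) ∧
    (Finset.univ.filter fun v : MetallicVertex a n =>
      (metallicCube a n).degree v = 2 * n).card = (a - 2) ^ n :=
  metallic_max_degree_general a n
end
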